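/- arXiv:math/0607372 — 3 statements merged into one kernel-verified Lean document; each statement's English description precedes it below -/
import Mathlib

section
/- (Unique non-crossing regular lift under clump contraction.) Let k ≥ 1, w = (w_1,…,w_k) with all w_i ≥ 1, n = w_1+⋯+w_k, and let c : {1,…,n} → {1,…,k} be defined by c(j) = i if and only if w_1+⋯+w_{i−1} < j ≤ w_1+⋯+w_i. Let d ≥ 1. Then for every non-crossing directed graph H on {1,…,k} of multidegree d·w in which every edge (i,j) satisfies i < j, there exists exactly one non-crossing directed graph G on {1,…,n} of multidegree (d,…,d), with every edge (i,j) satisfying i < j and no edge having both endpoints in a single fiber of c, such that the multiset {(c(i),c(j)) : (i,j) ∈ G} equals H. -/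
open MvPolynomial

/-- A directed multigraph on the vertex set `Fin n`: a multiset of ordered pairs
(multiple edges allowed). -/
abbrev DGraph (n : ℕ) := Multiset (Fin n × Fin n)

/-- `Γ` has no loops. -/
def DGraph.loopless {n : ℕ} (Γ : DGraph n) : Prop := ∀ e ∈ Γ, e.1 ≠ e.2

/-- The multidegree (valence) of `Γ` at the vertex `v`: the number of edges of `Γ`
incident to `v`, counted with multiplicity. -/
def DGraph.mdeg {n : ℕ} (Γ : DGraph n) (v : Fin n) : ℕ :=
  Multiset.countP (fun e => e.1 = v) Γ + Multiset.countP (fun e => e.2 = v) Γ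


/-- Two edges with underlying vertex pairs `{a,b}` (`a<b`) and `{c,d}` (`c<d`) cross iff
`a<c<b<d` or `c<a<d<b`.  (Edges sharing a vertex never cross.) -/
def Crosses {n : ℕ} (e f : Fin n × Fin n) : Prop :=
  (min e.1 e.2 < min f.1 f.2 ∧ min f.1 f.2 < max e.1 e.2 ∧ max e.1 e.2 < max f.1 f.2) ∨
  (min f.1 f.2 < min e.1 e.2 ∧ min e.1 e.2 < max f.1 f.2 ∧ max f.1 f.2 < max e.1 e.2)

/-- A graph is non-crossing if no two of its edges cross. -/
def Noncrossing {n : ℕ} (Γ : DGraph n) : Prop := ∀ e ∈ Γ, ∀ f ∈ Γ, ¬ Crosses e f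

/-! ### Auxiliary development -/

namespace NCLift

open Multiset Finset

abbrev NGraph := Multiset (ℕ × ℕ)

def nCrosses (e f : ℕ × ℕ) : Prop :=
  (min e.1 e.2 < min f.1 f.2 ∧ min f.1 f.2 < max e.1 e.2 ∧ max e.1 e.2 < max f.1 f.2) ∨
  (min f.1 f.2 < min e.1 e.2 ∧ min e.1 e.2 < max f.1 f.2 ∧ max f.1 f.2 < max e.1 e.2)

def nNC (M : NGraph) : Prop := ∀ e ∈ M, ∀ f ∈ M, ¬ nCrosses e f

def outP (M : NGraph) (g : ℕ) : ℕ := Multiset.countP (fun p => p.1 = g) M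
def inP (M : NGraph) (g : ℕ) : ℕ := Multiset.countP (fun p => p.2 = g) M

lemma nCrosses_iff {e f : ℕ × ℕ} (he : e.1 < e.2) (hf : f.1 < f.2) :
    nCrosses e f ↔ (e.1 < f.1 ∧ f.1 < e.2 ∧ e.2 < f.2) ∨
      (f.1 < e.1 ∧ e.1 < f.2 ∧ f.2 < e.2) := by
  unfold nCrosses
  rw [min_eq_left he.le, max_eq_right he.le, min_eq_left hf.le, max_eq_right hf.le]

/-! ### Multiset helpers -/

lemma countP_or {α : Type*} (p q : α → Prop) [DecidablePred p] [DecidablePred q]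
    (s : Multiset α) (hdisj : ∀ a ∈ s, ¬(p a ∧ q a)) :
    Multiset.countP (fun a => p a ∨ q a) s =
      Multiset.countP p s + Multiset.countP q s := by
  induction s using Multiset.induction with
  | empty => simp
  | cons a s ih =>
    rw [Multiset.countP_cons, Multiset.countP_cons, Multiset.countP_cons,
      ih (fun x hx => hdisj x (Multiset.mem_cons_of_mem hx))]
    have := hdisj a (Multiset.mem_cons_self a s)
    by_cases hp : p a
    · by_cases hq : q a
      · exact absurd ⟨hp, hq⟩ this
      · simp [hp, hq]; omega
    · by_cases hq : q a <;> simp [hp, hq] <;> omega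

lemma countP_le_countP_of_imp {α : Type*} {p q : α → Prop} [DecidablePred p] [DecidablePred q]
    {s : Multiset α} (h : ∀ a ∈ s, p a → q a) :
    Multiset.countP p s ≤ Multiset.countP q s := by
  induction s using Multiset.induction with
  | empty => simp
  | cons a s ih =>
    rw [Multiset.countP_cons, Multiset.countP_cons]
    have h1 := ih (fun x hx => h x (Multiset.mem_cons_of_mem hx))
    have h2 := h a (Multiset.mem_cons_self a s)
    by_cases hp : p a <;> by_cases hq : q a <;> simp [hp, hq] at h2 ⊢ <;> omega

lemma countP_finsetSum {α β : Type*} (S : Finset β) (F : β → Multiset α)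
    (p : α → Prop) [DecidablePred p] :
    Multiset.countP p (∑ e ∈ S, F e) = ∑ e ∈ S, Multiset.countP p (F e) := by
  classical
  induction S using Finset.induction with
  | empty => simp
  | @insert _ _ h ih =>
    rw [Finset.sum_insert h, Finset.sum_insert h, Multiset.countP_add, ih]

lemma map_finsetSum {α β γ : Type*} (S : Finset β) (F : β → Multiset α) (f : α → γ) :
    (∑ e ∈ S, F e).map f = ∑ e ∈ S, (F e).map f := by
  classical
  induction S using Finset.induction with
  | empty => simp
  | @insert _ _ h ih =>
    rw [Finset.sum_insert h, Finset.sum_insert h, Multiset.map_add, ih]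

lemma countP_mem_fiber {α : Type*} (f : α → ℕ) (S : Finset ℕ) (s : Multiset α) :
    Multiset.countP (fun a => f a ∈ S) s = ∑ g ∈ S, Multiset.countP (fun a => f a = g) s := by
  classical
  induction S using Finset.induction with
  | empty => simp
  | @insert g S hg ih =>
    rw [Finset.sum_insert hg, ← ih]
    rw [← countP_or (fun a => f a = g) (fun a => f a ∈ S) s
      (fun a _ h => hg (h.1 ▸ h.2))]
    exact Multiset.countP_congr rfl (fun x _ => by simp [Finset.mem_insert])

lemma countP_erase {α : Type*} [DecidableEq α] (p : α → Prop) [DecidablePred p]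
    (s : Multiset α) (a : α) (h : a ∈ s) :
    Multiset.countP p (s.erase a) = Multiset.countP p s - (if p a then 1 else 0) := by
  conv_rhs => rw [← Multiset.cons_erase h]
  rw [Multiset.countP_cons]
  omega

lemma two_le_countP {α : Type*} [DecidableEq α] {p : α → Prop} [DecidablePred p]
    {s : Multiset α} {a b : α} (ha : a ∈ s) (hb : b ∈ s) (hab : a ≠ b)
    (hpa : p a) (hpb : p b) : 2 ≤ Multiset.countP p s := by
  have hb' : b ∈ s.erase a := (Multiset.mem_erase_of_ne (Ne.symm hab)).2 hb
  have h1 : 0 < Multiset.countP p (s.erase a) := Multiset.countP_pos.2 ⟨b, hb', hpb⟩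
  have := countP_erase p s a ha
  have h2 : 0 < Multiset.countP p s := Multiset.countP_pos.2 ⟨a, ha, hpa⟩
  simp [hpa] at this
  omega

lemma binary_antitone_eq {δ s : ℕ} {f : ℕ → ℕ} (h1 : ∀ r < δ, f r ≤ 1)
    (hmono : ∀ r r', r ≤ r' → r' < δ → 1 ≤ f r' → 1 ≤ f r)
    (hsum : ∑ r ∈ Finset.range δ, f r = s) :
    ∀ r < δ, f r = if r < s then 1 else 0 := by
  intro r hr
  by_cases hrs : r < s
  · simp only [if_pos hrs]
    by_contra hne
    have hf0 : f r = 0 := by have := h1 r hr; omega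
    have hsplit : ∑ x ∈ Finset.range δ, f x =
        ∑ x ∈ Finset.range r, f x + ∑ x ∈ Finset.Ico r δ, f x := by
      exact (Finset.sum_range_add_sum_Ico f hr.le).symm
    have hz : ∑ x ∈ Finset.Ico r δ, f x = 0 := by
      apply Finset.sum_eq_zero
      intro r' hr'
      rw [Finset.mem_Ico] at hr'
      by_contra h
      have := hmono r r' hr'.1 hr'.2 (by omega)
      omega
    have hle : ∑ x ∈ Finset.range r, f x ≤ r := by
      calc ∑ x ∈ Finset.range r, f x ≤ ∑ _x ∈ Finset.range r, 1 :=
            Finset.sum_le_sum (fun i hi => h1 i (lt_of_lt_of_le (Finset.mem_range.1 hi) hr.le))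
        _ = r := by simp
    omega
  · simp only [if_neg hrs]
    by_contra hne
    have hf1 : 1 ≤ f r := by omega
    have hone : ∀ r' ∈ Finset.range (r + 1), 1 ≤ f r' := by
      intro r' hr'
      rw [Finset.mem_range] at hr'
      exact hmono r' r (by omega) hr hf1
    have : r + 1 ≤ ∑ x ∈ Finset.range δ, f x := by
      calc r + 1 = ∑ _x ∈ Finset.range (r + 1), 1 := by simp
        _ ≤ ∑ x ∈ Finset.range (r + 1), f x := Finset.sum_le_sum hone
        _ ≤ ∑ x ∈ Finset.range δ, f x :=
            Finset.sum_le_sum_of_subset (Finset.range_subset_range.2 (by omega))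
    omega

lemma countP_range_shift (A m g : ℕ) :
    Multiset.countP (fun t => A + t = g) (Multiset.range m)
      = if A ≤ g ∧ g < A + m then 1 else 0 := by
  induction m with
  | zero =>
    rw [Multiset.range_zero, Multiset.countP_zero]
    split_ifs with h
    · omega
    · rfl
  | succ m ih =>
    rw [Multiset.range_succ, Multiset.countP_cons, ih]
    split_ifs <;> omega

lemma map_range_rev (m : ℕ) :
    (Multiset.range m).map (fun t => m - 1 - t) = Multiset.range m := by
  apply Multiset.eq_of_le_of_card_le
  · rw [Multiset.le_iff_subset]
    · intro x hx
      rw [Multiset.mem_map] at hx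
      obtain ⟨t, ht, rfl⟩ := hx
      rw [Multiset.mem_range] at *
      omega
    · refine Multiset.Nodup.map_on ?_ (Multiset.nodup_range m)
      intro x hx y hy h
      rw [Multiset.mem_range] at hx hy
      omega
  · simp

lemma countP_range_rev (A m g : ℕ) :
    Multiset.countP (fun t => A + (m - 1 - t) = g) (Multiset.range m)
      = if A ≤ g ∧ g < A + m then 1 else 0 := by
  have step : Multiset.countP (fun t => A + (m - 1 - t) = g) (Multiset.range m)
      = Multiset.countP (fun t => A + t = g) ((Multiset.range m).map (fun t => m - 1 - t)) := by
    rw [Multiset.countP_map, Multiset.countP_eq_card_filter]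
  rw [step, map_range_rev, countP_range_shift]

lemma map_eq_sum_replicate {α β : Type*} [DecidableEq α] (s : Multiset α) (F : α → β) :
    s.map F = ∑ a ∈ s.toFinset, Multiset.replicate (s.count a) (F a) := by
  conv_lhs => rw [← Multiset.toFinset_sum_count_nsmul_eq s]
  rw [map_finsetSum]
  exact Finset.sum_congr rfl (fun a _ => by
    rw [← Multiset.nsmul_singleton, Multiset.map_nsmul, Multiset.map_singleton,
      Multiset.nsmul_singleton])


section Blocks

variable {κ : ℕ}

def outv (Γ : DGraph κ) (v : Fin κ) : ℕ := Multiset.countP (fun e => e.1 = v) Γ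
def insv (Γ : DGraph κ) (v : Fin κ) : ℕ := Multiset.countP (fun e => e.2 = v) Γ

lemma mdeg_eq (Γ : DGraph κ) (v : Fin κ) : Γ.mdeg v = outv Γ v + insv Γ v := rfl

def eB (Γ : DGraph κ) (v : Fin κ) : ℕ :=
  ∑ u ∈ Finset.univ.filter (fun u => u < v), Γ.mdeg u

def eN (Γ : DGraph κ) : ℕ := ∑ u, Γ.mdeg u

lemma card_filter_lt (v : Fin κ) : (Finset.univ.filter (fun u => u < v)).card = v.val := by
  have h : Finset.univ.filter (fun u => u < v) = Finset.Iio v := by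
    ext u; simp
  rw [h, Fin.card_Iio]

lemma eB_block_mono (Γ : DGraph κ) {u v : Fin κ} (h : u < v) :
    eB Γ u + Γ.mdeg u ≤ eB Γ v := by
  have hsub : insert u (Finset.univ.filter (fun x => x < u))
      ⊆ Finset.univ.filter (fun x => x < v) := by
    intro x hx
    rcases Finset.mem_insert.1 hx with rfl | hx
    · simp [h]
    · simp only [Finset.mem_filter, Finset.mem_univ, true_and] at hx ⊢
      exact lt_trans hx h
  have hnot : u ∉ Finset.univ.filter (fun x => x < u) := by simp
  calc eB Γ u + Γ.mdeg u
      = ∑ x ∈ insert u (Finset.univ.filter (fun x => x < u)), Γ.mdeg x := by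
        rw [Finset.sum_insert hnot, Nat.add_comm]; rfl
    _ ≤ _ := Finset.sum_le_sum_of_subset hsub

lemma eB_le_eN (Γ : DGraph κ) (v : Fin κ) : eB Γ v + Γ.mdeg v ≤ eN Γ := by
  have hnot : v ∉ Finset.univ.filter (fun x => x < v) := by simp
  calc eB Γ v + Γ.mdeg v
      = ∑ x ∈ insert v (Finset.univ.filter (fun x => x < v)), Γ.mdeg x := by
        rw [Finset.sum_insert hnot, Nat.add_comm]; rfl
    _ ≤ _ := Finset.sum_le_sum_of_subset (Finset.subset_univ _)

lemma block_disj (Γ : DGraph κ) {u v : Fin κ} {g : ℕ}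
    (hu1 : eB Γ u ≤ g) (hu2 : g < eB Γ u + Γ.mdeg u)
    (hv1 : eB Γ v ≤ g) (hv2 : g < eB Γ v + Γ.mdeg v) : u = v := by
  rcases lt_trichotomy u v with h | h | h
  · have := eB_block_mono Γ h; omega
  · exact h
  · have := eB_block_mono Γ h; omega

lemma eB_succ (Γ : DGraph κ) (v : Fin κ) (h : v.val + 1 < κ) :
    eB Γ ⟨v.val + 1, h⟩ = eB Γ v + Γ.mdeg v := by
  have hset : Finset.univ.filter (fun u : Fin κ => u < (⟨v.val + 1, h⟩ : Fin κ))
      = insert v (Finset.univ.filter (fun u => u < v)) := by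
    ext u
    simp only [Finset.mem_filter, Finset.mem_univ, true_and, Finset.mem_insert,
      Fin.lt_def, Fin.ext_iff]
    omega
  rw [eB, hset, Finset.sum_insert (by simp), Nat.add_comm]
  rfl

lemma eB_last (Γ : DGraph κ) (v : Fin κ) (hv : v.val + 1 = κ) :
    eB Γ v + Γ.mdeg v = eN Γ := by
  have hset : (Finset.univ : Finset (Fin κ))
      = insert v (Finset.univ.filter (fun u => u < v)) := by
    ext u
    simp only [Finset.mem_univ, Finset.mem_insert, Finset.mem_filter, true_and,
      Fin.lt_def, Fin.ext_iff, true_iff]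
    have := u.isLt
    omega
  rw [eN, hset, Finset.sum_insert (by simp), Nat.add_comm]
  rfl

lemma block_exists (Γ : DGraph κ) {g : ℕ} (hg : g < eN Γ) :
    ∃ v : Fin κ, eB Γ v ≤ g ∧ g < eB Γ v + Γ.mdeg v := by
  have hκ : 0 < κ := by
    by_contra h
    have hk0 : κ = 0 := by omega
    subst hk0
    rw [eN, Finset.univ_eq_empty, Finset.sum_empty] at hg
    omega
  set S : Finset (Fin κ) := Finset.univ.filter (fun u => eB Γ u ≤ g) with hS
  have h0 : (⟨0, hκ⟩ : Fin κ) ∈ S := by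
    rw [hS]
    simp only [Finset.mem_filter, Finset.mem_univ, true_and]
    have hempty : Finset.univ.filter (fun u : Fin κ => u < (⟨0, hκ⟩ : Fin κ)) = ∅ := by
      ext u; simp [Fin.lt_def]
    rw [eB, hempty, Finset.sum_empty]
    omega
  have hSne : S.Nonempty := ⟨_, h0⟩
  set v := S.max' hSne with hv
  have hvS : v ∈ S := S.max'_mem hSne
  have hv1 : eB Γ v ≤ g := by rw [hS] at hvS; simpa using hvS
  refine ⟨v, hv1, ?_⟩
  by_contra hcon
  push_neg at hcon
  by_cases htop : v.val + 1 < κ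
  · have hmem : (⟨v.val + 1, htop⟩ : Fin κ) ∈ S := by
      rw [hS]
      simp only [Finset.mem_filter, Finset.mem_univ, true_and]
      rw [eB_succ Γ v htop]
      omega
    have hle := S.le_max' _ hmem
    rw [← hv, Fin.le_def] at hle
    simp at hle
  · have hlast := eB_last Γ v (by have := v.isLt; omega)
    omega

def βf (Γ : DGraph κ) (g : ℕ) : ℕ :=
  (Finset.univ.filter (fun u => eB Γ u + Γ.mdeg u ≤ g)).card

lemma βf_char (Γ : DGraph κ) {v : Fin κ} {g : ℕ}
    (h1 : eB Γ v ≤ g) (h2 : g < eB Γ v + Γ.mdeg v) : βf Γ g = v.val := by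
  rw [βf]
  have hset : Finset.univ.filter (fun u => eB Γ u + Γ.mdeg u ≤ g)
      = Finset.univ.filter (fun u => u < v) := by
    ext u
    simp only [Finset.mem_filter, Finset.mem_univ, true_and]
    constructor
    · intro h
      by_contra hlt
      push_neg at hlt
      rcases eq_or_lt_of_le hlt with heq | hlt'
      · subst heq; omega
      · have := eB_block_mono Γ hlt'; omega
    · intro h
      have := eB_block_mono Γ h
      omega
  rw [hset, card_filter_lt]

lemma βf_block (Γ : DGraph κ) {g : ℕ} (hg : g < eN Γ) {v : Fin κ} (h : βf Γ g = v.val) :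
    eB Γ v ≤ g ∧ g < eB Γ v + Γ.mdeg v := by
  obtain ⟨u, hu1, hu2⟩ := block_exists Γ hg
  have hchar := βf_char Γ hu1 hu2
  have huv : u = v := Fin.ext (by omega)
  subst huv
  exact ⟨hu1, hu2⟩

end Blocks



section CM

variable {κ : ℕ}

lemma count_eq (Γ : DGraph κ) (e : Fin κ × Fin κ) :
    Γ.count e = Multiset.countP (fun f => e = f) Γ := rfl

def cgt (Γ : DGraph κ) (e : Fin κ × Fin κ) : ℕ :=
  Multiset.countP (fun f => f.1 = e.1 ∧ e.2 < f.2) Γ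

def cgs (Γ : DGraph κ) (e : Fin κ × Fin κ) : ℕ :=
  Multiset.countP (fun f => f.2 = e.2 ∧ e.1 < f.1) Γ

def soB (Γ : DGraph κ) (e : Fin κ × Fin κ) : ℕ := eB Γ e.1 + insv Γ e.1 + cgt Γ e

def taB (Γ : DGraph κ) (e : Fin κ × Fin κ) : ℕ := eB Γ e.2 + cgs Γ e

def CM (Γ : DGraph κ) : NGraph :=
  ∑ e ∈ Γ.toFinset, (Multiset.range (Γ.count e)).map
    (fun t => (soB Γ e + t, taB Γ e + (Γ.count e - 1 - t)))

lemma cgt_add_count_le (Γ : DGraph κ) {e : Fin κ × Fin κ} :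
    cgt Γ e + Γ.count e ≤ outv Γ e.1 := by
  rw [cgt, count_eq, outv]
  have hdisj : ∀ f ∈ Γ, ¬((f.1 = e.1 ∧ e.2 < f.2) ∧ e = f) := by
    rintro f _ ⟨⟨_, hlt⟩, rfl⟩
    exact lt_irrefl _ hlt
  rw [← countP_or _ _ Γ hdisj]
  refine countP_le_countP_of_imp (fun f _ h => ?_)
  rcases h with ⟨h1, _⟩ | h
  · exact h1
  · rw [← h]

lemma cgs_add_count_le (Γ : DGraph κ) {e : Fin κ × Fin κ} :
    cgs Γ e + Γ.count e ≤ insv Γ e.2 := by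
  rw [cgs, count_eq, insv]
  have hdisj : ∀ f ∈ Γ, ¬((f.2 = e.2 ∧ e.1 < f.1) ∧ e = f) := by
    rintro f _ ⟨⟨_, hlt⟩, rfl⟩
    exact lt_irrefl _ hlt
  rw [← countP_or _ _ Γ hdisj]
  refine countP_le_countP_of_imp (fun f _ h => ?_)
  rcases h with ⟨h1, _⟩ | h
  · exact h1
  · rw [← h]

lemma so_mem (Γ : DGraph κ) {e : Fin κ × Fin κ} {t : ℕ} (ht : t < Γ.count e) :
    eB Γ e.1 + insv Γ e.1 ≤ soB Γ e + t ∧ soB Γ e + t < eB Γ e.1 + Γ.mdeg e.1 := by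
  have h1 := cgt_add_count_le Γ (e := e)
  have h2 := mdeg_eq Γ e.1
  rw [soB]
  omega

lemma ta_mem (Γ : DGraph κ) {e : Fin κ × Fin κ} {t : ℕ} (ht : t < Γ.count e) :
    eB Γ e.2 ≤ taB Γ e + (Γ.count e - 1 - t) ∧
      taB Γ e + (Γ.count e - 1 - t) < eB Γ e.2 + insv Γ e.2 := by
  have h1 := cgs_add_count_le Γ (e := e)
  rw [taB]
  omega

lemma mem_CM {Γ : DGraph κ} {p : ℕ × ℕ} :
    p ∈ CM Γ ↔ ∃ e, e ∈ Γ ∧ ∃ t, t < Γ.count e ∧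
      p = (soB Γ e + t, taB Γ e + (Γ.count e - 1 - t)) := by
  rw [CM, Multiset.mem_sum]
  constructor
  · rintro ⟨e, he, hp⟩
    rw [Multiset.mem_map] at hp
    obtain ⟨t, ht, rfl⟩ := hp
    exact ⟨e, Multiset.mem_toFinset.1 he, t, Multiset.mem_range.1 ht, rfl⟩
  · rintro ⟨e, he, t, ht, rfl⟩
    exact ⟨e, Multiset.mem_toFinset.2 he, Multiset.mem_map.2 ⟨t, Multiset.mem_range.2 ht, rfl⟩⟩

lemma CM_slots {Γ : DGraph κ} {p : ℕ × ℕ} (hp : p ∈ CM Γ) : p.1 < eN Γ ∧ p.2 < eN Γ := by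
  obtain ⟨e, he, t, ht, rfl⟩ := mem_CM.1 hp
  have h1 := (so_mem Γ ht).2
  have h2 := (ta_mem Γ ht).2
  have h3 := eB_le_eN Γ e.1
  have h4 := eB_le_eN Γ e.2
  have h5 := mdeg_eq Γ e.2
  exact ⟨by dsimp only; omega, by dsimp only; omega⟩

lemma CM_inc {Γ : DGraph κ} (hinc : ∀ e ∈ Γ, e.1 < e.2) {p : ℕ × ℕ} (hp : p ∈ CM Γ) :
    p.1 < p.2 := by
  obtain ⟨e, he, t, ht, rfl⟩ := mem_CM.1 hp
  have h1 := (so_mem Γ ht).2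
  have h2 := (ta_mem Γ ht).1
  have h3 := eB_block_mono Γ (hinc e he)
  dsimp only
  omega

lemma outP_CM_eq (Γ : DGraph κ) (g : ℕ) :
    outP (CM Γ) g = ∑ e ∈ Γ.toFinset,
      (if soB Γ e ≤ g ∧ g < soB Γ e + Γ.count e then 1 else 0) := by
  rw [outP, CM, countP_finsetSum]
  refine Finset.sum_congr rfl (fun e _ => ?_)
  rw [Multiset.countP_map, ← Multiset.countP_eq_card_filter, ← countP_range_shift (soB Γ e) (Γ.count e) g]

lemma inP_CM_eq (Γ : DGraph κ) (g : ℕ) :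
    inP (CM Γ) g = ∑ e ∈ Γ.toFinset,
      (if taB Γ e ≤ g ∧ g < taB Γ e + Γ.count e then 1 else 0) := by
  rw [inP, CM, countP_finsetSum]
  refine Finset.sum_congr rfl (fun e _ => ?_)
  rw [Multiset.countP_map, ← Multiset.countP_eq_card_filter, ← countP_range_rev (taB Γ e) (Γ.count e) g]

lemma outP_CM_zero (Γ : DGraph κ) {g : ℕ} (hg : eN Γ ≤ g) : outP (CM Γ) g = 0 := by
  rw [outP, Multiset.countP_eq_zero]
  intro p hp hp1
  have := (CM_slots hp).1
  omega

lemma inP_CM_zero (Γ : DGraph κ) {g : ℕ} (hg : eN Γ ≤ g) : inP (CM Γ) g = 0 := by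
  rw [inP, Multiset.countP_eq_zero]
  intro p hp hp2
  have := (CM_slots hp).2
  omega

end CM



section Word

variable {κ : ℕ}

lemma outP_CM (Γ : DGraph κ) (v : Fin κ) {r : ℕ} (hr : r < Γ.mdeg v) :
    outP (CM Γ) (eB Γ v + r) = if insv Γ v ≤ r then 1 else 0 := by
  classical
  rw [outP_CM_eq]
  have hsrc : ∀ e : Fin κ × Fin κ,
      (soB Γ e ≤ eB Γ v + r ∧ eB Γ v + r < soB Γ e + Γ.count e) → e.1 = v := by
    rintro e ⟨h1, h2⟩
    have h3 := cgt_add_count_le Γ (e := e)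
    have h4 := mdeg_eq Γ e.1
    have h1' : eB Γ e.1 ≤ eB Γ v + r := by rw [soB] at h1; omega
    have h2' : eB Γ v + r < eB Γ e.1 + Γ.mdeg e.1 := by rw [soB] at h2; omega
    exact block_disj Γ h1' h2' (by omega) (by omega)
  by_cases hcase : insv Γ v ≤ r
  · rw [if_pos hcase]
    have hκ : 0 < κ := v.pos
    set cge : Fin κ → ℕ := fun b => Multiset.countP (fun f => f.1 = v ∧ b ≤ f.2) Γ with hcge
    have hsplit : ∀ b : Fin κ, cge b = cgt Γ (v, b) + Γ.count (v, b) := by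
      intro b
      have hdisj : ∀ f ∈ Γ, ¬((f.1 = (v, b).1 ∧ (v, b).2 < f.2) ∧ (v, b) = f) := by
        rintro f _ ⟨⟨_, hlt⟩, rfl⟩
        exact lt_irrefl _ hlt
      rw [hcge, cgt, count_eq, ← countP_or _ _ Γ hdisj]
      refine Multiset.countP_congr rfl (fun f _ => propext ?_)
      constructor
      · rintro ⟨hf1, hf2⟩
        rcases lt_or_eq_of_le hf2 with h | h
        · exact Or.inl ⟨hf1, h⟩
        · exact Or.inr (Prod.ext_iff.2 ⟨hf1.symm, h⟩)
      · rintro (⟨hf1, hf2⟩ | rfl)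
        · exact ⟨hf1, le_of_lt hf2⟩
        · exact ⟨rfl, le_refl _⟩
    have hmono : ∀ {b b' : Fin κ}, b < b' → cge b' ≤ cgt Γ (v, b) := by
      intro b b' hbb
      rw [hcge, cgt]
      exact countP_le_countP_of_imp (fun f _ h => ⟨h.1, lt_of_lt_of_le hbb h.2⟩)
    set r' := r - insv Γ v with hr'def
    have hr'lt : r' < outv Γ v := by have := mdeg_eq Γ v; omega
    set S := Finset.univ.filter (fun b => r' < cge b) with hSdef
    have h0S : (⟨0, hκ⟩ : Fin κ) ∈ S := by
      rw [hSdef]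
      simp only [Finset.mem_filter, Finset.mem_univ, true_and]
      have hout : cge ⟨0, hκ⟩ = outv Γ v := by
        rw [hcge, outv]
        refine Multiset.countP_congr rfl (fun f _ => propext ?_)
        exact ⟨fun h => h.1, fun h => ⟨h, by simp [Fin.le_def]⟩⟩
      omega
    have hSne : S.Nonempty := ⟨_, h0S⟩
    set b0 := S.max' hSne with hb0def
    have hb0mem : b0 ∈ S := S.max'_mem hSne
    have hb1 : r' < cge b0 := by rw [hSdef] at hb0mem; simpa using hb0mem
    have hb2 : cgt Γ (v, b0) ≤ r' := by
      by_cases htop : b0.val + 1 < κ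
      · have hnotS : (⟨b0.val + 1, htop⟩ : Fin κ) ∉ S := by
          intro hmem
          have hle := S.le_max' _ hmem
          rw [← hb0def, Fin.le_def] at hle
          simp at hle
        rw [hSdef] at hnotS
        simp only [Finset.mem_filter, Finset.mem_univ, true_and, not_lt] at hnotS
        refine le_trans (le_of_eq ?_) hnotS
        rw [hcge, cgt]
        refine Multiset.countP_congr rfl (fun f _ => propext ?_)
        constructor
        · rintro ⟨h1, h2⟩
          refine ⟨h1, ?_⟩
          rw [Fin.lt_def] at h2
          rw [Fin.le_def]
          simp only [] at h2 ⊢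
          omega
        · rintro ⟨h1, h2⟩
          refine ⟨h1, ?_⟩
          rw [Fin.le_def] at h2
          rw [Fin.lt_def]
          simp only [] at h2 ⊢
          omega
      · have hz : cgt Γ (v, b0) = 0 := by
          rw [cgt, Multiset.countP_eq_zero]
          rintro f _ ⟨_, hlt⟩
          rw [Fin.lt_def] at hlt
          have := f.2.isLt
          simp only [] at hlt
          omega
        omega
    have hcpos : 0 < Γ.count (v, b0) := by have := hsplit b0; omega
    have hmemF : (v, b0) ∈ Γ.toFinset := Multiset.mem_toFinset.2 (Multiset.count_pos.1 hcpos)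
    rw [Finset.sum_eq_single_of_mem (v, b0) hmemF ?side]
    case side =>
      intro e heF hene
      rw [if_neg]
      rintro ⟨h1, h2⟩
      have he1 : e.1 = v := hsrc e ⟨h1, h2⟩
      have heq : e = (v, e.2) := by rw [← he1]
      have hne2 : e.2 ≠ b0 := fun h => hene (by rw [heq, h])
      rw [heq, soB] at h1 h2
      dsimp only at h1 h2
      have hin : e.2 ∈ S := by
        rw [hSdef]
        simp only [Finset.mem_filter, Finset.mem_univ, true_and]
        rw [hsplit e.2]
        omega
      have hleb0 : e.2 < b0 :=
        lt_of_le_of_ne (by rw [hb0def]; exact S.le_max' _ hin) hne2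
      have hcontra := hmono hleb0
      omega
    · rw [if_pos]
      constructor
      · rw [soB]
        dsimp only
        omega
      · rw [soB]
        dsimp only
        have := hsplit b0
        omega
  · rw [if_neg hcase]
    apply Finset.sum_eq_zero
    intro e heF
    rw [if_neg]
    rintro ⟨h1, h2⟩
    have he1 : e.1 = v := hsrc e ⟨h1, h2⟩
    rw [soB, he1] at h1
    omega

lemma inP_CM (Γ : DGraph κ) (v : Fin κ) {r : ℕ} (hr : r < Γ.mdeg v) :
    inP (CM Γ) (eB Γ v + r) = if r < insv Γ v then 1 else 0 := by
  classical
  rw [inP_CM_eq]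
  have htgt : ∀ e : Fin κ × Fin κ,
      (taB Γ e ≤ eB Γ v + r ∧ eB Γ v + r < taB Γ e + Γ.count e) → e.2 = v := by
    rintro e ⟨h1, h2⟩
    have h3 := cgs_add_count_le Γ (e := e)
    have h4 := mdeg_eq Γ e.2
    have h1' : eB Γ e.2 ≤ eB Γ v + r := by rw [taB] at h1; omega
    have h2' : eB Γ v + r < eB Γ e.2 + Γ.mdeg e.2 := by rw [taB] at h2; omega
    exact block_disj Γ h1' h2' (by omega) (by omega)
  by_cases hcase : r < insv Γ v
  · rw [if_pos hcase]
    have hκ : 0 < κ := v.pos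
    set cge : Fin κ → ℕ := fun a => Multiset.countP (fun f => f.2 = v ∧ a ≤ f.1) Γ with hcge
    have hsplit : ∀ a : Fin κ, cge a = cgs Γ (a, v) + Γ.count (a, v) := by
      intro a
      have hdisj : ∀ f ∈ Γ, ¬((f.2 = (a, v).2 ∧ (a, v).1 < f.1) ∧ (a, v) = f) := by
        rintro f _ ⟨⟨_, hlt⟩, rfl⟩
        exact lt_irrefl _ hlt
      rw [hcge, cgs, count_eq, ← countP_or _ _ Γ hdisj]
      refine Multiset.countP_congr rfl (fun f _ => propext ?_)
      constructor
      · rintro ⟨hf1, hf2⟩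
        rcases lt_or_eq_of_le hf2 with h | h
        · exact Or.inl ⟨hf1, h⟩
        · exact Or.inr (Prod.ext_iff.2 ⟨h, hf1.symm⟩)
      · rintro (⟨hf1, hf2⟩ | rfl)
        · exact ⟨hf1, le_of_lt hf2⟩
        · exact ⟨rfl, le_refl _⟩
    have hmono : ∀ {a a' : Fin κ}, a < a' → cge a' ≤ cgs Γ (a, v) := by
      intro a a' haa
      rw [hcge, cgs]
      exact countP_le_countP_of_imp (fun f _ h => ⟨h.1, lt_of_lt_of_le haa h.2⟩)
    set S := Finset.univ.filter (fun a => r < cge a) with hSdef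
    have h0S : (⟨0, hκ⟩ : Fin κ) ∈ S := by
      rw [hSdef]
      simp only [Finset.mem_filter, Finset.mem_univ, true_and]
      have hout : cge ⟨0, hκ⟩ = insv Γ v := by
        rw [hcge, insv]
        refine Multiset.countP_congr rfl (fun f _ => propext ?_)
        exact ⟨fun h => h.1, fun h => ⟨h, by simp [Fin.le_def]⟩⟩
      omega
    have hSne : S.Nonempty := ⟨_, h0S⟩
    set a0 := S.max' hSne with ha0def
    have ha0mem : a0 ∈ S := S.max'_mem hSne
    have hb1 : r < cge a0 := by rw [hSdef] at ha0mem; simpa using ha0mem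
    have hb2 : cgs Γ (a0, v) ≤ r := by
      by_cases htop : a0.val + 1 < κ
      · have hnotS : (⟨a0.val + 1, htop⟩ : Fin κ) ∉ S := by
          intro hmem
          have hle := S.le_max' _ hmem
          rw [← ha0def, Fin.le_def] at hle
          simp at hle
        rw [hSdef] at hnotS
        simp only [Finset.mem_filter, Finset.mem_univ, true_and, not_lt] at hnotS
        refine le_trans (le_of_eq ?_) hnotS
        rw [hcge, cgs]
        refine Multiset.countP_congr rfl (fun f _ => propext ?_)
        constructor
        · rintro ⟨h1, h2⟩
          refine ⟨h1, ?_⟩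
          rw [Fin.lt_def] at h2
          rw [Fin.le_def]
          simp only [] at h2 ⊢
          omega
        · rintro ⟨h1, h2⟩
          refine ⟨h1, ?_⟩
          rw [Fin.le_def] at h2
          rw [Fin.lt_def]
          simp only [] at h2 ⊢
          omega
      · have hz : cgs Γ (a0, v) = 0 := by
          rw [cgs, Multiset.countP_eq_zero]
          rintro f _ ⟨_, hlt⟩
          rw [Fin.lt_def] at hlt
          have := f.1.isLt
          simp only [] at hlt
          omega
        omega
    have hcpos : 0 < Γ.count (a0, v) := by have := hsplit a0; omega
    have hmemF : (a0, v) ∈ Γ.toFinset := Multiset.mem_toFinset.2 (Multiset.count_pos.1 hcpos)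
    rw [Finset.sum_eq_single_of_mem (a0, v) hmemF ?side]
    case side =>
      intro e heF hene
      rw [if_neg]
      rintro ⟨h1, h2⟩
      have he2 : e.2 = v := htgt e ⟨h1, h2⟩
      have heq : e = (e.1, v) := by rw [← he2]
      have hne1 : e.1 ≠ a0 := fun h => hene (by rw [heq, h])
      rw [heq, taB] at h1 h2
      dsimp only at h1 h2
      have hin : e.1 ∈ S := by
        rw [hSdef]
        simp only [Finset.mem_filter, Finset.mem_univ, true_and]
        rw [hsplit e.1]
        omega
      have hlea0 : e.1 < a0 :=
        lt_of_le_of_ne (by rw [ha0def]; exact S.le_max' _ hin) hne1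
      have hcontra := hmono hlea0
      omega
    · rw [if_pos]
      constructor
      · rw [taB]
        dsimp only
        omega
      · rw [taB]
        dsimp only
        have := hsplit a0
        omega
  · rw [if_neg hcase]
    apply Finset.sum_eq_zero
    intro e heF
    rw [if_neg]
    rintro ⟨h1, h2⟩
    have he2 : e.2 = v := htgt e ⟨h1, h2⟩
    have h3 := cgs_add_count_le Γ (e := e)
    rw [taB, he2] at h2
    rw [he2] at h3
    omega

lemma CM_deg1 (Γ : DGraph κ) (g : ℕ) :
    outP (CM Γ) g + inP (CM Γ) g = if g < eN Γ then 1 else 0 := by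
  by_cases hg : g < eN Γ
  · rw [if_pos hg]
    obtain ⟨v, hv1, hv2⟩ := block_exists Γ hg
    obtain ⟨r, rfl⟩ : ∃ r, g = eB Γ v + r := ⟨g - eB Γ v, by omega⟩
    have hr : r < Γ.mdeg v := by omega
    rw [outP_CM Γ v hr, inP_CM Γ v hr]
    split_ifs <;> omega
  · rw [if_neg hg, outP_CM_zero Γ (by omega), inP_CM_zero Γ (by omega)]

end Word



section Cross

variable {κ : ℕ}

lemma CM_key (Γ : DGraph κ) (hinc : ∀ e ∈ Γ, e.1 < e.2) (hnc : Noncrossing Γ)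
    {e f : Fin κ × Fin κ} (he : e ∈ Γ) (hf : f ∈ Γ) {t t' : ℕ}
    (ht : t < Γ.count e) (ht' : t' < Γ.count f)
    (h1 : soB Γ e + t < soB Γ f + t')
    (h2 : soB Γ f + t' < taB Γ e + (Γ.count e - 1 - t))
    (h3 : taB Γ e + (Γ.count e - 1 - t) < taB Γ f + (Γ.count f - 1 - t')) : False := by
  have heinc := hinc e he
  have hfinc := hinc f hf
  have hxe := so_mem Γ (e := e) ht
  have hxf := so_mem Γ (e := f) ht'
  have hye := ta_mem Γ (e := e) ht
  have hyf := ta_mem Γ (e := f) ht'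
  have haa : e.1 ≤ f.1 := by
    by_contra hlt
    push_neg at hlt
    have := eB_block_mono Γ hlt
    have h5 := mdeg_eq Γ f.1
    omega
  have hab : f.1 ≤ e.2 := by
    by_contra hlt
    push_neg at hlt
    have := eB_block_mono Γ hlt
    have h5 := mdeg_eq Γ e.2
    omega
  have hbb : e.2 ≤ f.2 := by
    by_contra hlt
    push_neg at hlt
    have := eB_block_mono Γ hlt
    have h5 := mdeg_eq Γ f.2
    omega
  rcases eq_or_lt_of_le haa with haa' | haa'
  · rcases eq_or_lt_of_le hbb with hbb' | hbb'
    · have hef : e = f := Prod.ext_iff.2 ⟨haa', hbb'⟩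
      rw [← hef] at h1 h2 h3 ht'
      omega
    · have hgt : cgt Γ f + Γ.count f ≤ cgt Γ e := by
        rw [cgt, cgt, count_eq]
        have hdisj : ∀ x ∈ Γ, ¬((x.1 = f.1 ∧ f.2 < x.2) ∧ f = x) := by
          rintro x _ ⟨⟨_, hlt⟩, rfl⟩
          exact lt_irrefl _ hlt
        rw [← countP_or _ _ Γ hdisj]
        refine countP_le_countP_of_imp (fun x _ hx => ?_)
        rcases hx with ⟨hx1, hx2⟩ | hx
        · exact ⟨hx1.trans haa'.symm, lt_trans hbb' hx2⟩
        · rw [← hx]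
          exact ⟨haa'.symm, hbb'⟩
      rw [soB, soB, haa'] at h1
      omega
  · rcases eq_or_lt_of_le hab with hab' | hab'
    · rw [hab'] at hxf
      omega
    · rcases eq_or_lt_of_le hbb with hbb' | hbb'
      · have hgs : cgs Γ f + Γ.count f ≤ cgs Γ e := by
          rw [cgs, cgs, count_eq]
          have hdisj : ∀ x ∈ Γ, ¬((x.2 = f.2 ∧ f.1 < x.1) ∧ f = x) := by
            rintro x _ ⟨⟨_, hlt⟩, rfl⟩
            exact lt_irrefl _ hlt
          rw [← countP_or _ _ Γ hdisj]
          refine countP_le_countP_of_imp (fun x _ hx => ?_)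
          rcases hx with ⟨hx1, hx2⟩ | hx
          · exact ⟨hx1.trans hbb'.symm, lt_trans haa' hx2⟩
          · rw [← hx]
            exact ⟨hbb'.symm, haa'⟩
        rw [taB, taB, hbb'] at h3
        have hc2 : 0 < Γ.count f := Multiset.count_pos.2 hf
        omega
      · have hcr : Crosses e f := by
          left
          rw [min_eq_left heinc.le, min_eq_left hfinc.le, max_eq_right heinc.le,
            max_eq_right hfinc.le]
          exact ⟨haa', hab', hbb'⟩
        exact hnc e he f hf hcr

lemma CM_nc (Γ : DGraph κ) (hinc : ∀ e ∈ Γ, e.1 < e.2) (hnc : Noncrossing Γ) :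
    nNC (CM Γ) := by
  intro p hp q hq hcr
  have hpinc : p.1 < p.2 := CM_inc hinc hp
  have hqinc : q.1 < q.2 := CM_inc hinc hq
  rw [nCrosses_iff hpinc hqinc] at hcr
  obtain ⟨e, he, t, ht, rfl⟩ := mem_CM.1 hp
  obtain ⟨f, hf, t', ht', rfl⟩ := mem_CM.1 hq
  dsimp only at hcr
  rcases hcr with ⟨h1, h2, h3⟩ | ⟨h1, h2, h3⟩
  · exact CM_key Γ hinc hnc he hf ht ht' h1 h2 h3
  · exact CM_key Γ hinc hnc hf he ht' ht h1 h2 h3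

lemma map_CM {γ : Type*} (Γ : DGraph κ) (φ : ℕ × ℕ → γ) (F : Fin κ × Fin κ → γ)
    (h : ∀ e ∈ Γ, ∀ t < Γ.count e,
      φ (soB Γ e + t, taB Γ e + (Γ.count e - 1 - t)) = F e) :
    (CM Γ).map φ = Γ.map F := by
  classical
  rw [CM, map_finsetSum, map_eq_sum_replicate Γ F]
  refine Finset.sum_congr rfl (fun e heF => ?_)
  rw [Multiset.map_map]
  have hcongr : ∀ t ∈ Multiset.range (Γ.count e),
      (φ ∘ fun t => (soB Γ e + t, taB Γ e + (Γ.count e - 1 - t))) t = F e := by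
    intro t ht
    exact h e (Multiset.mem_toFinset.1 heF) t (Multiset.mem_range.1 ht)
  rw [Multiset.map_congr rfl hcongr, Multiset.map_const', Multiset.card_range]

end Cross



section MatchUnique

lemma matching_unique : ∀ (N : ℕ) (M M' : NGraph), Multiset.card M ≤ N →
    nNC M → nNC M' → (∀ p ∈ M, p.1 < p.2) → (∀ p ∈ M', p.1 < p.2) →
    (∀ g, outP M g = outP M' g) → (∀ g, inP M g = inP M' g) →
    (∀ g, outP M g + inP M g ≤ 1) → M = M' := by
  intro N
  induction N with
  | zero =>
    intro M M' hcard _ _ _ _ hout _ _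
    have hM : M = 0 := by
      rw [← Multiset.card_eq_zero]
      omega
    subst hM
    symm
    rw [Multiset.eq_zero_iff_forall_notMem]
    intro p hp
    have h1 : 0 < outP M' p.1 := Multiset.countP_pos.2 ⟨p, hp, rfl⟩
    rw [← hout p.1] at h1
    simp [outP] at h1
  | succ N ih =>
    intro M M' hcard hnc hnc' hinc hinc' hout hin hdeg1
    by_cases hM : M = 0
    · subst hM
      symm
      rw [Multiset.eq_zero_iff_forall_notMem]
      intro p hp
      have h1 : 0 < outP M' p.1 := Multiset.countP_pos.2 ⟨p, hp, rfl⟩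
      rw [← hout p.1] at h1
      simp [outP] at h1
    · have hne : M.toFinset.Nonempty := by
        rw [Multiset.toFinset_nonempty]
        exact hM
      obtain ⟨e, heF, hemin⟩ := Finset.exists_min_image M.toFinset (fun p => p.2 - p.1) hne
      have he : e ∈ M := Multiset.mem_toFinset.1 heF
      have hegh : e.1 < e.2 := hinc e he
      have claim1 : ∀ q ∈ M, ¬(e.1 < q.1 ∧ q.1 < e.2) := by
        rintro q hq ⟨hq1, hq2⟩
        have hqinc := hinc q hq
        rcases lt_trichotomy q.2 e.2 with h | h | h
        · have := hemin q (Multiset.mem_toFinset.2 hq)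
          omega
        · have hqe : q ≠ e := fun hqe => by rw [hqe] at hq1; omega
          have h2 := two_le_countP hq he hqe (p := fun x => x.2 = e.2) h rfl
          have h3 := hdeg1 e.2
          have h4 : inP M e.2 = Multiset.countP (fun x : ℕ × ℕ => x.2 = e.2) M := rfl
          omega
        · have hcr : nCrosses e q := by
            rw [nCrosses_iff hegh hqinc]
            exact Or.inl ⟨hq1, hq2, h⟩
          exact hnc e he q hq hcr
      have claim2 : ∀ q ∈ M, ¬(e.1 < q.2 ∧ q.2 < e.2) := by
        rintro q hq ⟨hq1, hq2⟩
        have hqinc := hinc q hq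
        rcases lt_trichotomy q.1 e.1 with h | h | h
        · have hcr : nCrosses e q := by
            rw [nCrosses_iff hegh hqinc]
            exact Or.inr ⟨h, hq1, hq2⟩
          exact hnc e he q hq hcr
        · have hqe : q ≠ e := fun hqe => by rw [hqe] at hq2; omega
          have h2 := two_le_countP hq he hqe (p := fun x => x.1 = e.1) h rfl
          have h3 := hdeg1 e.1
          have h4 : outP M e.1 = Multiset.countP (fun x : ℕ × ℕ => x.1 = e.1) M := rfl
          omega
        · exact claim1 q hq ⟨h, lt_trans hqinc hq2⟩
      have hdeg1' : ∀ g, outP M' g + inP M' g ≤ 1 := fun g => by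
        rw [← hout, ← hin]
        exact hdeg1 g
      have hinPe : 0 < inP M' e.2 := by
        rw [← hin]
        exact Multiset.countP_pos.2 ⟨e, he, rfl⟩
      obtain ⟨q', hq', hq'2⟩ := Multiset.countP_pos.1 hinPe
      have hq'inc := hinc' q' hq'
      have hq'1 : q'.1 = e.1 := by
        rcases lt_trichotomy q'.1 e.1 with h | h | h
        · exfalso
          have houtPe : 0 < outP M' e.1 := by
            rw [← hout]
            exact Multiset.countP_pos.2 ⟨e, he, rfl⟩
          obtain ⟨f'', hf'', hf''1⟩ := Multiset.countP_pos.1 houtPe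
          have hf''inc := hinc' f'' hf''
          rcases lt_trichotomy f''.2 e.2 with hh | hh | hh
          · have hpos : 0 < inP M f''.2 := by
              rw [hin]
              exact Multiset.countP_pos.2 ⟨f'', hf'', rfl⟩
            obtain ⟨q, hq, hqq⟩ := Multiset.countP_pos.1 hpos
            refine claim2 q hq ⟨?_, ?_⟩ <;> omega
          · have hne'' : f'' ≠ q' := fun hh2 => by rw [hh2] at hf''1; omega
            have h2 := two_le_countP hf'' hq' hne'' (p := fun x => x.2 = e.2) hh hq'2
            have h3 := hdeg1' e.2
            have h4 : inP M' e.2 = Multiset.countP (fun x : ℕ × ℕ => x.2 = e.2) M' := rfl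
            omega
          · have hcr : nCrosses f'' q' := by
              rw [nCrosses_iff hf''inc hq'inc]
              exact Or.inr ⟨by omega, by omega, by omega⟩
            exact hnc' f'' hf'' q' hq' hcr
        · exact h
        · exfalso
          have hpos : 0 < outP M q'.1 := by
            rw [hout]
            exact Multiset.countP_pos.2 ⟨q', hq', rfl⟩
          obtain ⟨q, hq, hqq⟩ := Multiset.countP_pos.1 hpos
          refine claim1 q hq ⟨?_, ?_⟩ <;> omega
      have hq'e : q' = e := Prod.ext_iff.2 ⟨hq'1, hq'2⟩
      rw [hq'e] at hq'
      have key : M.erase e = M'.erase e := by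
        apply ih
        · have hc := Multiset.card_erase_of_mem he
          rw [hc, Nat.pred_eq_sub_one]
          omega
        · intro p hp q hq
          exact hnc p (Multiset.mem_of_le (Multiset.erase_le e M) hp)
            q (Multiset.mem_of_le (Multiset.erase_le e M) hq)
        · intro p hp q hq
          exact hnc' p (Multiset.mem_of_le (Multiset.erase_le e M') hp)
            q (Multiset.mem_of_le (Multiset.erase_le e M') hq)
        · intro p hp
          exact hinc p (Multiset.mem_of_le (Multiset.erase_le e M) hp)
        · intro p hp
          exact hinc' p (Multiset.mem_of_le (Multiset.erase_le e M') hp)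
        · intro g
          have h := hout g
          simp only [outP] at h ⊢
          rw [countP_erase _ M e he, countP_erase _ M' e hq', h]
        · intro g
          have h := hin g
          simp only [inP] at h ⊢
          rw [countP_erase _ M e he, countP_erase _ M' e hq', h]
        · intro g
          have h := hdeg1 g
          simp only [outP, inP] at h ⊢
          rw [countP_erase (fun p => p.1 = g) M e he, countP_erase (fun p => p.2 = g) M e he]
          omega
      rw [← Multiset.cons_erase he, ← Multiset.cons_erase hq', key]

end MatchUnique



section LiftUnique

variable {κ : ℕ}

lemma lift_unique (Γ : DGraph κ) (hinc : ∀ e ∈ Γ, e.1 < e.2) (hnc : Noncrossing Γ)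
    (M : NGraph) (hMnc : nNC M) (hMinc : ∀ p ∈ M, p.1 < p.2)
    (hMdeg : ∀ g, outP M g + inP M g = if g < eN Γ then 1 else 0)
    (hMblk : ∀ p ∈ M, βf Γ p.1 < βf Γ p.2)
    (hMmap : M.map (fun p => (βf Γ p.1, βf Γ p.2)) = Γ.map (fun e => (e.1.val, e.2.val))) :
    M = CM Γ := by
  have hend : ∀ p ∈ M, p.1 < eN Γ ∧ p.2 < eN Γ := by
    intro p hp
    constructor
    · by_contra h
      push_neg at h
      have h1 : 0 < outP M p.1 := Multiset.countP_pos.2 ⟨p, hp, rfl⟩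
      have h2 := hMdeg p.1
      rw [if_neg (by omega)] at h2
      omega
    · by_contra h
      push_neg at h
      have h1 : 0 < inP M p.2 := Multiset.countP_pos.2 ⟨p, hp, rfl⟩
      have h2 := hMdeg p.2
      rw [if_neg (by omega)] at h2
      omega
  have hinW : ∀ (v : Fin κ), ∀ r < Γ.mdeg v,
      inP M (eB Γ v + r) = if r < insv Γ v then 1 else 0 := by
    intro v
    have h1 : ∀ r < Γ.mdeg v, inP M (eB Γ v + r) ≤ 1 := by
      intro r hr
      have h2 := hMdeg (eB Γ v + r)
      have := eB_le_eN Γ v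
      rw [if_pos (by omega)] at h2
      omega
    have hmono : ∀ r r', r ≤ r' → r' < Γ.mdeg v → 1 ≤ inP M (eB Γ v + r') →
        1 ≤ inP M (eB Γ v + r) := by
      intro r r' hrr hr' hpos
      rcases eq_or_lt_of_le hrr with rfl | hlt
      · exact hpos
      by_contra hzero
      push_neg at hzero
      have hlt1 : eB Γ v + r < eN Γ := by have := eB_le_eN Γ v; omega
      have h2 := hMdeg (eB Γ v + r)
      rw [if_pos hlt1] at h2
      have houtpos : 0 < outP M (eB Γ v + r) := by omega
      obtain ⟨p, hp, hp1⟩ := Multiset.countP_pos.1 houtpos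
      obtain ⟨q, hq, hq2⟩ := Multiset.countP_pos.1 (by omega : 0 < inP M (eB Γ v + r'))
      have hpe := hend p hp
      have hqe := hend q hq
      have hβp : βf Γ p.1 = v.val := by
        rw [hp1]
        exact βf_char Γ (by omega) (by omega)
      have hβq : βf Γ q.2 = v.val := by
        rw [hq2]
        exact βf_char Γ (by omega) (by omega)
      obtain ⟨v2, hv21, hv22⟩ := block_exists Γ hpe.2
      have hβ2 := βf_char Γ hv21 hv22
      have hv2v : v < v2 := by
        have hb := hMblk p hp
        rw [hβp, hβ2] at hb
        exact Fin.lt_def.2 (by omega)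
      have hp2big := eB_block_mono Γ hv2v
      obtain ⟨v1, hv11, hv12⟩ := block_exists Γ hqe.1
      have hβ1 := βf_char Γ hv11 hv12
      have hv1v : v1 < v := by
        have hb := hMblk q hq
        rw [hβq, hβ1] at hb
        exact Fin.lt_def.2 (by omega)
      have hq1small := eB_block_mono Γ hv1v
      have hcr : nCrosses p q := by
        rw [nCrosses_iff (hMinc p hp) (hMinc q hq)]
        right
        exact ⟨by omega, by omega, by omega⟩
      exact hMnc p hp q hq hcr
    have hsum : ∑ r ∈ Finset.range (Γ.mdeg v), inP M (eB Γ v + r) = insv Γ v := by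
      have hIco : ∑ r ∈ Finset.range (Γ.mdeg v), inP M (eB Γ v + r)
          = ∑ g ∈ Finset.Ico (eB Γ v) (eB Γ v + Γ.mdeg v), inP M g := by
        rw [Finset.sum_Ico_eq_sum_range]
        have harg : eB Γ v + Γ.mdeg v - eB Γ v = Γ.mdeg v := by omega
        rw [harg]
      rw [hIco]
      simp only [inP]
      rw [← countP_mem_fiber (fun p : ℕ × ℕ => p.2)
        (Finset.Ico (eB Γ v) (eB Γ v + Γ.mdeg v)) M]
      have hiff : ∀ p ∈ M, (p.2 ∈ Finset.Ico (eB Γ v) (eB Γ v + Γ.mdeg v))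
          = (βf Γ p.2 = v.val) := by
        intro p hp
        apply propext
        rw [Finset.mem_Ico]
        constructor
        · intro h
          exact βf_char Γ h.1 h.2
        · intro h
          exact βf_block Γ (hend p hp).2 h
      rw [Multiset.countP_congr rfl hiff]
      have hmapped : Multiset.countP (fun x : ℕ × ℕ => x.2 = v.val)
          (M.map (fun p => (βf Γ p.1, βf Γ p.2)))
          = Multiset.countP (fun p : ℕ × ℕ => βf Γ p.2 = v.val) M := by
        rw [Multiset.countP_map, ← Multiset.countP_eq_card_filter]
      rw [← hmapped, hMmap, Multiset.countP_map, ← Multiset.countP_eq_card_filter, insv]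
      refine Multiset.countP_congr rfl (fun f _ => ?_)
      simp [Fin.ext_iff]
    exact binary_antitone_eq h1 hmono hsum
  have houtW : ∀ (v : Fin κ), ∀ r < Γ.mdeg v,
      outP M (eB Γ v + r) = if insv Γ v ≤ r then 1 else 0 := by
    intro v r hr
    have h1 := hMdeg (eB Γ v + r)
    have h2 := hinW v r hr
    have := eB_le_eN Γ v
    rw [if_pos (by omega)] at h1
    split_ifs at h2 ⊢ <;> omega
  refine matching_unique (Multiset.card M) M (CM Γ) le_rfl hMnc (CM_nc Γ hinc hnc) hMinc
    (fun p hp => CM_inc hinc hp) ?_ ?_ ?_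
  · intro g
    by_cases hg : g < eN Γ
    · obtain ⟨v, hv1, hv2⟩ := block_exists Γ hg
      obtain ⟨r, rfl⟩ : ∃ r, g = eB Γ v + r := ⟨g - eB Γ v, by omega⟩
      rw [houtW v r (by omega), outP_CM Γ v (by omega)]
    · have h1 := hMdeg g
      rw [if_neg hg] at h1
      rw [outP_CM_zero Γ (by omega)]
      omega
  · intro g
    by_cases hg : g < eN Γ
    · obtain ⟨v, hv1, hv2⟩ := block_exists Γ hg
      obtain ⟨r, rfl⟩ : ∃ r, g = eB Γ v + r := ⟨g - eB Γ v, by omega⟩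
      rw [hinW v r (by omega), inP_CM Γ v (by omega)]
    · have h1 := hMdeg g
      rw [if_neg hg] at h1
      rw [inP_CM_zero Γ (by omega)]
      omega
  · intro g
    have h1 := hMdeg g
    split_ifs at h1 <;> omega

end LiftUnique



lemma Crosses_iff {n : ℕ} {e f : Fin n × Fin n} (he : e.1 < e.2) (hf : f.1 < f.2) :
    Crosses e f ↔ (e.1 < f.1 ∧ f.1 < e.2 ∧ e.2 < f.2) ∨
      (f.1 < e.1 ∧ e.1 < f.2 ∧ f.2 < e.2) := by
  unfold Crosses
  rw [min_eq_left he.le, max_eq_right he.le, min_eq_left hf.le, max_eq_right hf.le]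


section Wsum

def Wsum {k : ℕ} (w : Fin k → ℕ) (i : Fin k) : ℕ :=
  ∑ i' ∈ Finset.univ.filter (fun i' => i' < i), w i'

lemma Wsum_le_split {k : ℕ} (w : Fin k → ℕ) (i : Fin k) :
    (∑ i' ∈ Finset.univ.filter (fun i' => i' ≤ i), w i') = Wsum w i + w i := by
  have hset : Finset.univ.filter (fun i' => i' ≤ i)
      = insert i (Finset.univ.filter (fun i' => i' < i)) := by
    ext u
    simp only [Finset.mem_filter, Finset.mem_univ, true_and, Finset.mem_insert]
    constructor
    · intro h
      rcases eq_or_lt_of_le h with h | h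
      · exact Or.inl h
      · exact Or.inr h
    · rintro (rfl | h)
      · exact le_refl _
      · exact le_of_lt h
  rw [hset, Finset.sum_insert (by simp), Wsum, Nat.add_comm]

lemma Wsum_mono {k : ℕ} (w : Fin k → ℕ) {i i' : Fin k} (h : i < i') :
    Wsum w i + w i ≤ Wsum w i' := by
  have hsub : insert i (Finset.univ.filter (fun u => u < i))
      ⊆ Finset.univ.filter (fun u => u < i') := by
    intro x hx
    rcases Finset.mem_insert.1 hx with rfl | hx
    · simp [h]
    · simp only [Finset.mem_filter, Finset.mem_univ, true_and] at hx ⊢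
      exact lt_trans hx h
  calc Wsum w i + w i
      = ∑ x ∈ insert i (Finset.univ.filter (fun u => u < i)), w x := by
        rw [Finset.sum_insert (by simp), Nat.add_comm]
        rfl
    _ ≤ _ := Finset.sum_le_sum_of_subset hsub

end Wsum

end NCLift


/-- **Unique non-crossing regular lift under clump contraction.** Let `w = (w_1,…,w_k)`
with all `w_i ≥ 1`, `n = w_1 + ⋯ + w_k`, and let `c : {1,…,n} → {1,…,k}` be the clump
map.  For every `d ≥ 1` and every non-crossing graph `H` on `{1,…,k}` of multidegree
`d·w` with increasing edges, there is exactly one non-crossing graph `G` on `{1,…,n}` of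
multidegree `(d,…,d)`, with increasing edges and no edge inside a single clump, whose
contraction `{(c i, c j) : (i,j) ∈ G}` equals `H`. -/
theorem unique_noncrossing_lift (k : ℕ) (w : Fin k → ℕ) (hw : ∀ i, 1 ≤ w i)
    (n : ℕ) (hn : n = ∑ i, w i)
    (c : Fin n → Fin k)
    (hc : ∀ (j : Fin n) (i : Fin k), c j = i ↔
      (∑ i' ∈ Finset.univ.filter (fun i' => i' < i), w i') ≤ (j : ℕ) ∧
      (j : ℕ) < ∑ i' ∈ Finset.univ.filter (fun i' => i' ≤ i), w i')
    (d : ℕ) (hd : 1 ≤ d)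
    (H : DGraph k) (hHl : H.loopless) (hHnc : Noncrossing H)
    (hHdeg : ∀ v, H.mdeg v = d * w v) (hHinc : ∀ e ∈ H, e.1 < e.2) :
    ∃! G : DGraph n,
      G.loopless ∧ Noncrossing G ∧ (∀ v, G.mdeg v = d) ∧ (∀ e ∈ G, e.1 < e.2) ∧
      (∀ e ∈ G, c e.1 ≠ c e.2) ∧ G.map (fun e => (c e.1, c e.2)) = H := by
  classical
  rcases Nat.eq_zero_or_pos k with hk0 | hk
  · subst hk0
    have hn0 : n = 0 := by simpa using hn
    subst hn0
    have hH0 : H = 0 := Multiset.eq_zero_of_forall_notMem (fun e _ => e.1.elim0)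
    refine ⟨0, ⟨?_, ?_, ?_, ?_, ?_, ?_⟩, ?_⟩
    · intro e he
      exact absurd he (Multiset.notMem_zero e)
    · intro e he
      exact absurd he (Multiset.notMem_zero e)
    · intro v
      exact v.elim0
    · intro e he
      exact absurd he (Multiset.notMem_zero e)
    · intro e he
      exact absurd he (Multiset.notMem_zero e)
    · rw [hH0, Multiset.map_zero]
    · intro G' _
      exact Multiset.eq_zero_of_forall_notMem (fun e _ => e.1.elim0)
  · have hd0 : 0 < d := hd
    have hkn : k ≤ n := by
      rw [hn]
      calc k = ∑ _i : Fin k, 1 := by simp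
        _ ≤ ∑ i, w i := Finset.sum_le_sum (fun i _ => hw i)
    have hn0 : 0 < n := lt_of_lt_of_le hk hkn
    have hc' : ∀ (j : Fin n) (i : Fin k),
        c j = i ↔ NCLift.Wsum w i ≤ (j : ℕ) ∧ (j : ℕ) < NCLift.Wsum w i + w i := by
      intro j i
      rw [hc j i, NCLift.Wsum_le_split w i]
      exact Iff.rfl
    have hWn : ∀ i : Fin k, NCLift.Wsum w i + w i ≤ n := by
      intro i
      rw [hn, ← NCLift.Wsum_le_split w i]
      exact Finset.sum_le_sum_of_subset (Finset.subset_univ _)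
    have hcmono : ∀ {j j' : Fin n}, j < j' → c j ≤ c j' := by
      intro j j' h
      by_contra hlt
      push_neg at hlt
      have h1 := (hc' j (c j)).1 rfl
      have h2 := (hc' j' (c j')).1 rfl
      have h3 := NCLift.Wsum_mono w hlt
      rw [Fin.lt_def] at h
      omega
    have hmdegH : ∀ i, H.mdeg i = w i * d := fun i => by rw [hHdeg i, Nat.mul_comm]
    have heBH : ∀ i, NCLift.eB H i = NCLift.Wsum w i * d := by
      intro i
      rw [NCLift.eB, NCLift.Wsum, Finset.sum_mul]
      exact Finset.sum_congr rfl (fun u _ => by rw [hmdegH u])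
    have heNH : NCLift.eN H = n * d := by
      rw [NCLift.eN, Finset.sum_congr rfl (fun u _ => hmdegH u), ← Finset.sum_mul, ← hn]
    set ψ : ℕ → Fin n := fun g => ⟨g / d % n, Nat.mod_lt _ hn0⟩ with hψ
    have hψval : ∀ {g x : ℕ}, x < n → x * d ≤ g → g < x * d + d → (ψ g : ℕ) = x := by
      intro g x hx h1 h2
      have hA : x ≤ g / d := (Nat.le_div_iff_mul_le hd0).2 h1
      have hB : g / d < x + 1 := (Nat.div_lt_iff_lt_mul hd0).2 (by rw [Nat.add_mul]; omega)
      have hdiv : g / d = x := by omega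
      simp only [hψ]
      rw [hdiv, Nat.mod_eq_of_lt hx]
    have hψblk : ∀ {g : ℕ} (i : Fin k), NCLift.eB H i ≤ g → g < NCLift.eB H i + H.mdeg i →
        c (ψ g) = i := by
      intro g i h1 h2
      rw [heBH i] at h1
      rw [heBH i, hmdegH i] at h2
      have hdivlo : NCLift.Wsum w i ≤ g / d := (Nat.le_div_iff_mul_le hd0).2 h1
      have hdivhi : g / d < NCLift.Wsum w i + w i :=
        (Nat.div_lt_iff_lt_mul hd0).2 (by rw [Nat.add_mul]; omega)
      have hlt : g / d < n := by have := hWn i; omega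
      have hvv : (ψ g : ℕ) = g / d := by
        simp only [hψ]
        exact Nat.mod_eq_of_lt hlt
      rw [hc', hvv]
      exact ⟨hdivlo, hdivhi⟩
    have hψlt : ∀ {a b : ℕ}, a < n * d → b < n * d → ψ a < ψ b → a < b := by
      intro a b ha hb h
      rw [Fin.lt_def] at h
      simp only [hψ] at h
      have ha' : a / d < n := (Nat.div_lt_iff_lt_mul hd0).2 ha
      have hb' : b / d < n := (Nat.div_lt_iff_lt_mul hd0).2 hb
      rw [Nat.mod_eq_of_lt ha', Nat.mod_eq_of_lt hb'] at h
      by_contra hc2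
      push_neg at hc2
      exact absurd h (not_lt.2 (Nat.div_le_div_right hc2))
    have hcso : ∀ e ∈ H, ∀ t < H.count e,
        c (ψ (NCLift.soB H e + t)) = e.1 ∧
        c (ψ (NCLift.taB H e + (H.count e - 1 - t))) = e.2 := by
      intro e he t ht
      have h1 := NCLift.so_mem H (e := e) ht
      have h2 := NCLift.ta_mem H (e := e) ht
      have h3 := NCLift.mdeg_eq H e.2
      exact ⟨hψblk e.1 (by omega) h1.2, hψblk e.2 h2.1 (by omega)⟩
    have hbound : ∀ p ∈ NCLift.CM H, p.1 < n * d ∧ p.2 < n * d := by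
      intro p hp
      have hs := NCLift.CM_slots hp
      rw [heNH] at hs
      exact hs
    have hedge : ∀ p ∈ NCLift.CM H,
        ∃ e, e ∈ H ∧ c (ψ p.1) = e.1 ∧ c (ψ p.2) = e.2 ∧ ψ p.1 < ψ p.2 := by
      intro p hp
      have hbp := hbound p hp
      obtain ⟨e, he, t, ht, rfl⟩ := NCLift.mem_CM.1 hp
      obtain ⟨hce1, hce2⟩ := hcso e he t ht
      refine ⟨e, he, hce1, hce2, ?_⟩
      have hAB : NCLift.soB H e + t ≤ NCLift.taB H e + (H.count e - 1 - t) := by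
        have h1 := (NCLift.so_mem H (e := e) ht).2
        have h2 := (NCLift.ta_mem H (e := e) ht).1
        have h3 := NCLift.eB_block_mono H (hHinc e he)
        omega
      dsimp only at hbp ⊢
      have hA' : (NCLift.soB H e + t) / d < n := (Nat.div_lt_iff_lt_mul hd0).2 hbp.1
      have hB' : (NCLift.taB H e + (H.count e - 1 - t)) / d < n :=
        (Nat.div_lt_iff_lt_mul hd0).2 hbp.2
      rw [Fin.lt_def]
      simp only [hψ]
      rw [Nat.mod_eq_of_lt hA', Nat.mod_eq_of_lt hB']
      have hle := Nat.div_le_div_right (c := d) hAB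
      rcases eq_or_lt_of_le hle with heq | hlt2
      · exfalso
        apply ne_of_lt (hHinc e he)
        rw [← hce1, ← hce2]
        congr 1
        apply Fin.ext
        simp only [hψ]
        rw [Nat.mod_eq_of_lt hA', Nat.mod_eq_of_lt hB', heq]
      · exact hlt2
    refine ⟨(NCLift.CM H).map (fun p => (ψ p.1, ψ p.2)), ⟨?_, ?_, ?_, ?_, ?_, ?_⟩, ?_⟩
    · intro E hE
      obtain ⟨p, hp, rfl⟩ := Multiset.mem_map.1 hE
      obtain ⟨e, he, _, _, hlt⟩ := hedge p hp
      exact ne_of_lt hlt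
    · intro E hE F hF hcr
      obtain ⟨p, hp, rfl⟩ := Multiset.mem_map.1 hE
      obtain ⟨q, hq, rfl⟩ := Multiset.mem_map.1 hF
      obtain ⟨e, he, _, _, hpinc⟩ := hedge p hp
      obtain ⟨f, hf, _, _, hqinc⟩ := hedge q hq
      rw [NCLift.Crosses_iff hpinc hqinc] at hcr
      have hbp := hbound p hp
      have hbq := hbound q hq
      have hpn : p.1 < p.2 := NCLift.CM_inc hHinc hp
      have hqn : q.1 < q.2 := NCLift.CM_inc hHinc hq
      have hncM := NCLift.CM_nc H hHinc hHnc
      dsimp only at hcr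
      rcases hcr with ⟨h1, h2, h3⟩ | ⟨h1, h2, h3⟩
      · exact hncM p hp q hq ((NCLift.nCrosses_iff hpn hqn).2
          (Or.inl ⟨hψlt hbp.1 hbq.1 h1, hψlt hbq.1 hbp.2 h2, hψlt hbp.2 hbq.2 h3⟩))
      · exact hncM p hp q hq ((NCLift.nCrosses_iff hpn hqn).2
          (Or.inr ⟨hψlt hbq.1 hbp.1 h1, hψlt hbp.1 hbq.2 h2, hψlt hbq.2 hbp.2 h3⟩))
    · intro v
      have hiff1 : ∀ p ∈ NCLift.CM H,
          ((ψ p.1 : Fin n) = v) = (p.1 ∈ Finset.Ico (v.val * d) (v.val * d + d)) := by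
        intro p hp
        apply propext
        rw [Finset.mem_Ico]
        constructor
        · intro h
          have hlt : p.1 / d < n := (Nat.div_lt_iff_lt_mul hd0).2 (hbound p hp).1
          have hval : p.1 / d = v.val := by
            have h2 := congrArg Fin.val h
            simp only [hψ] at h2
            rw [Nat.mod_eq_of_lt hlt] at h2
            exact h2
          constructor
          · rw [← hval]
            exact Nat.div_mul_le_self _ _
          · rw [← hval]
            have h3 := (Nat.div_lt_iff_lt_mul hd0).1 (Nat.lt_succ_self (p.1 / d))
            rw [Nat.succ_mul] at h3
            exact h3
        · rintro ⟨h1, h2⟩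
          exact Fin.ext (hψval v.isLt h1 h2)
      have hiff2 : ∀ p ∈ NCLift.CM H,
          ((ψ p.2 : Fin n) = v) = (p.2 ∈ Finset.Ico (v.val * d) (v.val * d + d)) := by
        intro p hp
        apply propext
        rw [Finset.mem_Ico]
        constructor
        · intro h
          have hlt : p.2 / d < n := (Nat.div_lt_iff_lt_mul hd0).2 (hbound p hp).2
          have hval : p.2 / d = v.val := by
            have h2 := congrArg Fin.val h
            simp only [hψ] at h2
            rw [Nat.mod_eq_of_lt hlt] at h2
            exact h2
          constructor
          · rw [← hval]
            exact Nat.div_mul_le_self _ _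
          · rw [← hval]
            have h3 := (Nat.div_lt_iff_lt_mul hd0).1 (Nat.lt_succ_self (p.2 / d))
            rw [Nat.succ_mul] at h3
            exact h3
        · rintro ⟨h1, h2⟩
          exact Fin.ext (hψval v.isLt h1 h2)
      have hf1 : Multiset.countP (fun E : Fin n × Fin n => E.1 = v)
            ((NCLift.CM H).map (fun p => (ψ p.1, ψ p.2)))
          = ∑ g ∈ Finset.Ico (v.val * d) (v.val * d + d), NCLift.outP (NCLift.CM H) g := by
        rw [Multiset.countP_map, ← Multiset.countP_eq_card_filter,
          Multiset.countP_congr rfl hiff1,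
          NCLift.countP_mem_fiber (fun p : ℕ × ℕ => p.1)
            (Finset.Ico (v.val * d) (v.val * d + d)) (NCLift.CM H)]
        rfl
      have hf2 : Multiset.countP (fun E : Fin n × Fin n => E.2 = v)
            ((NCLift.CM H).map (fun p => (ψ p.1, ψ p.2)))
          = ∑ g ∈ Finset.Ico (v.val * d) (v.val * d + d), NCLift.inP (NCLift.CM H) g := by
        rw [Multiset.countP_map, ← Multiset.countP_eq_card_filter,
          Multiset.countP_congr rfl hiff2,
          NCLift.countP_mem_fiber (fun p : ℕ × ℕ => p.2)
            (Finset.Ico (v.val * d) (v.val * d + d)) (NCLift.CM H)]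
        rfl
      rw [DGraph.mdeg, hf1, hf2, ← Finset.sum_add_distrib]
      have hone : ∀ g ∈ Finset.Ico (v.val * d) (v.val * d + d),
          NCLift.outP (NCLift.CM H) g + NCLift.inP (NCLift.CM H) g = 1 := by
        intro g hg
        rw [Finset.mem_Ico] at hg
        have hvn : v.val + 1 ≤ n := v.isLt
        have h2 : (v.val + 1) * d ≤ n * d := Nat.mul_le_mul_right d hvn
        rw [Nat.add_mul] at h2
        have hglt : g < NCLift.eN H := by
          rw [heNH]
          omega
        rw [NCLift.CM_deg1 H g, if_pos hglt]
      rw [Finset.sum_congr rfl hone, Finset.sum_const, Nat.card_Ico, smul_eq_mul]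
      omega
    · intro E hE
      obtain ⟨p, hp, rfl⟩ := Multiset.mem_map.1 hE
      obtain ⟨e, he, _, _, hlt⟩ := hedge p hp
      exact hlt
    · intro E hE
      obtain ⟨p, hp, rfl⟩ := Multiset.mem_map.1 hE
      obtain ⟨e, he, hce1, hce2, _⟩ := hedge p hp
      dsimp only
      rw [hce1, hce2]
      exact ne_of_lt (hHinc e he)
    · rw [Multiset.map_map]
      have hmc := NCLift.map_CM H
        ((fun E : Fin n × Fin n => (c E.1, c E.2)) ∘ (fun p : ℕ × ℕ => (ψ p.1, ψ p.2)))
        id ?_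
      · rw [hmc, Multiset.map_id]
      · intro e he t ht
        obtain ⟨h1, h2⟩ := hcso e he t ht
        exact Prod.ext_iff.2 ⟨h1, h2⟩
    · intro G' hG'
      obtain ⟨hG'1, hG'2, hG'3, hG'4, hG'5, hG'6⟩ := hG'
      have heBG' : ∀ v : Fin n, NCLift.eB G' v = v.val * d := by
        intro v
        rw [NCLift.eB, Finset.sum_congr rfl (fun u _ => hG'3 u), Finset.sum_const,
          NCLift.card_filter_lt, smul_eq_mul]
      have heNG' : NCLift.eN G' = n * d := by
        rw [NCLift.eN, Finset.sum_congr rfl (fun u _ => hG'3 u), Finset.sum_const,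
          Finset.card_univ, Fintype.card_fin, smul_eq_mul]
      have hrec : ∀ f ∈ G', ∀ t < G'.count f,
          ψ (NCLift.soB G' f + t) = f.1 ∧
          ψ (NCLift.taB G' f + (G'.count f - 1 - t)) = f.2 := by
        intro f hf t ht
        have h1 := NCLift.so_mem G' (e := f) ht
        have h2 := NCLift.ta_mem G' (e := f) ht
        have h3 := NCLift.mdeg_eq G' f.2
        have hb1 : NCLift.eB G' f.1 = f.1.val * d := heBG' f.1
        have hb2 : NCLift.eB G' f.2 = f.2.val * d := heBG' f.2
        have hd1 : G'.mdeg f.1 = d := hG'3 f.1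
        have hd2 : G'.mdeg f.2 = d := hG'3 f.2
        constructor
        · exact Fin.ext (hψval f.1.isLt (by omega) (by omega))
        · exact Fin.ext (hψval f.2.isLt (by omega) (by omega))
      have hG'rec : (NCLift.CM G').map (fun p : ℕ × ℕ => (ψ p.1, ψ p.2)) = G' := by
        have hmc := NCLift.map_CM G' (fun p : ℕ × ℕ => (ψ p.1, ψ p.2)) id ?_
        · rw [hmc, Multiset.map_id]
        · intro f hf t ht
          obtain ⟨h1, h2⟩ := hrec f hf t ht
          exact Prod.ext_iff.2 ⟨h1, h2⟩
      have hβH : ∀ f ∈ G', ∀ t < G'.count f,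
          NCLift.βf H (NCLift.soB G' f + t) = (c f.1).val ∧
          NCLift.βf H (NCLift.taB G' f + (G'.count f - 1 - t)) = (c f.2).val := by
        intro f hf t ht
        have h1 := NCLift.so_mem G' (e := f) ht
        have h2 := NCLift.ta_mem G' (e := f) ht
        have h3 := NCLift.mdeg_eq G' f.2
        have hb1 : NCLift.eB G' f.1 = f.1.val * d := heBG' f.1
        have hb2 : NCLift.eB G' f.2 = f.2.val * d := heBG' f.2
        have hd1 := hG'3 f.1
        have hd2 := hG'3 f.2
        have hcc1 := (hc' f.1 (c f.1)).1 rfl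
        have hcc2 := (hc' f.2 (c f.2)).1 rfl
        have hm1 : NCLift.Wsum w (c f.1) * d ≤ f.1.val * d :=
          Nat.mul_le_mul_right d hcc1.1
        have hm1' : (f.1.val + 1) * d ≤ (NCLift.Wsum w (c f.1) + w (c f.1)) * d :=
          Nat.mul_le_mul_right d hcc1.2
        have hm2 : NCLift.Wsum w (c f.2) * d ≤ f.2.val * d :=
          Nat.mul_le_mul_right d hcc2.1
        have hm2' : (f.2.val + 1) * d ≤ (NCLift.Wsum w (c f.2) + w (c f.2)) * d :=
          Nat.mul_le_mul_right d hcc2.2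
        rw [Nat.add_mul, Nat.add_mul, Nat.one_mul] at hm1'
        rw [Nat.add_mul, Nat.add_mul, Nat.one_mul] at hm2'
        constructor
        · refine NCLift.βf_char H (v := c f.1) ?_ ?_
          · rw [heBH]
            omega
          · rw [heBH, hmdegH]
            omega
        · refine NCLift.βf_char H (v := c f.2) ?_ ?_
          · rw [heBH]
            omega
          · rw [heBH, hmdegH]
            omega
      have hlift : NCLift.CM G' = NCLift.CM H := by
        apply NCLift.lift_unique H hHinc hHnc
        · exact NCLift.CM_nc G' hG'4 hG'2
        · exact fun p hp => NCLift.CM_inc hG'4 hp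
        · intro g
          rw [NCLift.CM_deg1 G' g, heNG', heNH]
        · intro p hp
          obtain ⟨f, hf, t, ht, rfl⟩ := NCLift.mem_CM.1 hp
          obtain ⟨hb1, hb2⟩ := hβH f hf t ht
          dsimp only
          rw [hb1, hb2]
          exact Fin.lt_def.1 (lt_of_le_of_ne (hcmono (hG'4 f hf)) (hG'5 f hf))
        · have hmc := NCLift.map_CM G'
            (fun p : ℕ × ℕ => (NCLift.βf H p.1, NCLift.βf H p.2))
            (fun f : Fin n × Fin n => ((c f.1).val, (c f.2).val)) ?_
          · rw [hmc, ← hG'6, Multiset.map_map]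
            rfl
          · intro f hf t ht
            obtain ⟨hb1, hb2⟩ := hβH f hf t ht
            exact Prod.ext_iff.2 ⟨hb1, hb2⟩
      rw [← hG'rec, hlift]
end

section
/- (Alternating power relations.) Let n ≥ 4 be even, let Γ be a perfect matching on {1,…,n}, and let i be an odd integer with 1 < i < n−1. For a permutation σ of {1,…,n}, let σΓ denote the directed graph {(σ(a),σ(b)) : (a,b) ∈ Γ}. Then Σ_{σ ∈ S_n} sgn(σ) · (X_{σΓ})^i = 0 in ℤ[u_1,…,u_n,v_1,…,v_n]. -/
open MvPolynomial

/-- A perfect matching on `{1,…,n}`: a directed graph of multidegree `(1,…,1)`.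
(Multidegree one everywhere forces looplessness.) -/
def DGraph.isPM {n : ℕ} (Γ : DGraph n) : Prop := ∀ v, Γ.mdeg v = 1

/-- The invariant `X_Γ = ∏_{(i,j) ∈ Γ} (u_j v_i - u_i v_j)`, where the variable
`Sum.inl i` plays the role of `u_i` and `Sum.inr i` plays the role of `v_i`. -/
noncomputable def XG {n : ℕ} (Γ : DGraph n) : MvPolynomial (Fin n ⊕ Fin n) ℤ :=
  (Γ.map (fun e => X (Sum.inl e.2) * X (Sum.inr e.1) - X (Sum.inl e.1) * X (Sum.inr e.2))).prod

/-! Write `σ • p` for the renaming `u_a ↦ u_{σ a}`, `v_a ↦ v_{σ a}`, so that `X_{σΓ} = σ • X_Γ`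
and the sum is the alternation of `X_Γ ^ i`, a linear combination of monomials. Since every
vertex lies on exactly one edge and each factor `u_j v_i - u_i v_j` has degree one in each of its
endpoints, every monomial of `X_Γ ^ i` has degree exactly `i` in each pair `(u_a, v_a)`. Its
`u`-exponents take at most `i + 1 < n` values, so two vertices `a ≠ b` carry the same pair of
exponents; the monomial is then fixed by the transposition `(a b)` and its alternation vanishes. -/

open Equiv

section Alternation

variable {α M R : Type*} [Fintype α] [AddCommGroup M] [CommRing R]

theorem Finsupp.exists_ne_of_forall_inl_add_inr_eq {i : ℕ} (d : α ⊕ α →₀ ℕ)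
    (hd : ∀ a, d (.inl a) + d (.inr a) = i) (hi : i + 1 < Fintype.card α) :
    ∃ a b, a ≠ b ∧ d (.inl a) = d (.inl b) ∧ d (.inr a) = d (.inr b) := by
  obtain ⟨a, b, hab, hab'⟩ := Fintype.exists_ne_map_eq_of_card_lt
    (fun a => (⟨d (.inl a), Nat.lt_succ_of_le (hd a ▸ Nat.le_add_right _ _)⟩ : Fin (i + 1)))
    (by simpa using hi)
  have hl : d (.inl a) = d (.inl b) := congrArg Fin.val hab'
  exact ⟨a, b, hab, hl, by have := hd a; have := hd b; omega⟩

variable [DecidableEq α]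

theorem Equiv.Perm.sum_sign_smul_eq_zero_of_mul_swap {f : Perm α → M} {a b : α} (hab : a ≠ b)
    (hf : ∀ σ, f (σ * swap a b) = f σ) :
    ∑ σ : Perm α, ((Perm.sign σ : ℤˣ) : ℤ) • f σ = 0 := by
  refine Finset.sum_involution (fun σ _ => σ * swap a b) (fun σ _ => ?_) (fun σ _ _ => ?_)
    (fun _ _ => Finset.mem_univ _) (fun σ _ => by simp [mul_assoc])
  · rw [hf, Perm.sign_mul, Perm.sign_swap hab]
    simp
  · simpa [mul_eq_left] using hab

namespace MvPolynomial

theorem sum_sign_smul_rename_monomial_eq_zero (d : α ⊕ α →₀ ℕ) (r : R) {a b : α} (hab : a ≠ b)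
    (hl : d (.inl a) = d (.inl b)) (hr : d (.inr a) = d (.inr b)) :
    ∑ σ : Perm α, ((Perm.sign σ : ℤˣ) : ℤ) • rename (Sum.map σ σ) (monomial d r) = 0 := by
  have hfix : rename (Sum.map (swap a b) (swap a b)) (monomial d r) = monomial d r := by
    have hτ : Sum.map (swap a b) (swap a b) = ⇑(Equiv.sumCongr (swap a b) (swap a b)) := rfl
    rw [rename_monomial, hτ]
    refine congrArg (monomial · r) (Finsupp.ext fun s => ?_)
    rw [Finsupp.mapDomain_equiv_apply]
    rcases s with c | c <;> simp [swap_apply_def] <;> split_ifs <;> simp_all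
  refine Perm.sum_sign_smul_eq_zero_of_mul_swap hab fun σ => ?_
  rw [Perm.coe_mul, ← Sum.map_comp_map, ← rename_rename, hfix]

theorem sum_sign_smul_rename_eq_zero (p : MvPolynomial (α ⊕ α) R)
    (hp : ∀ d ∈ p.support, ∃ a b, a ≠ b ∧ d (.inl a) = d (.inl b) ∧ d (.inr a) = d (.inr b)) :
    ∑ σ : Perm α, ((Perm.sign σ : ℤˣ) : ℤ) • rename (Sum.map σ σ) p = 0 := by
  conv_lhs => rw [p.as_sum]
  simp only [map_sum, Finset.smul_sum]
  rw [Finset.sum_comm]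
  refine Finset.sum_eq_zero fun d hd => ?_
  obtain ⟨a, b, hab, hl, hr⟩ := hp d hd
  exact sum_sign_smul_rename_monomial_eq_zero d _ hab hl hr

end MvPolynomial

/-- Both `u_a = Sum.inl a` and `v_a = Sum.inr a` get weight the indicator of the vertex `a`, so
that weighted homogeneity of degree `δ : α → ℕ` means multidegree `δ`. -/
def vertexWeight (α : Type*) [DecidableEq α] : α ⊕ α → α → ℕ :=
  Sum.elim (Pi.single · 1) (Pi.single · 1)

theorem weight_vertexWeight_apply (d : α ⊕ α →₀ ℕ) (a : α) :
    Finsupp.weight (vertexWeight α) d a = d (.inl a) + d (.inr a) := by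
  rw [Finsupp.weight_apply, Finsupp.sum_fintype _ _ (by simp), Finset.sum_apply,
    Fintype.sum_sum_type]
  simp [vertexWeight, Pi.single_apply]

end Alternation

theorem XG_map {n k : ℕ} (f : Fin n → Fin k) (Γ : DGraph n) :
    XG (Γ.map fun e => (f e.1, f e.2)) = rename (Sum.map f f) (XG Γ) := by
  simp [XG, map_multiset_prod, Multiset.map_map]

theorem DGraph.mdeg_zero {n : ℕ} : DGraph.mdeg (0 : DGraph n) = 0 :=
  funext fun v => by simp [DGraph.mdeg]

theorem DGraph.mdeg_cons {n : ℕ} (e : Fin n × Fin n) (Γ : DGraph n) :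
    DGraph.mdeg (e ::ₘ Γ) = Pi.single e.1 1 + Pi.single e.2 1 + Γ.mdeg := by
  ext v
  simp only [DGraph.mdeg, Multiset.countP_cons, Pi.add_apply, Pi.single_apply, eq_comm (a := v)]
  split_ifs <;> omega

theorem isWeightedHomogeneous_XG {n : ℕ} (Γ : DGraph n) :
    IsWeightedHomogeneous (vertexWeight (Fin n)) (XG Γ) Γ.mdeg := by
  induction Γ using Multiset.induction_on with
  | empty => simpa [XG, DGraph.mdeg_zero] using isWeightedHomogeneous_one ℤ (vertexWeight (Fin n))
  | cons e Γ ih =>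
    have hedge : IsWeightedHomogeneous (vertexWeight (Fin n))
        (X (.inl e.2) * X (.inr e.1) - X (.inl e.1) * X (.inr e.2) : MvPolynomial _ ℤ)
        (Pi.single e.1 1 + Pi.single e.2 1) := by
      refine .sub ?_ ?_
      · rw [add_comm]
        exact (isWeightedHomogeneous_X ℤ _ _).mul (isWeightedHomogeneous_X ℤ _ _)
      · exact (isWeightedHomogeneous_X ℤ _ _).mul (isWeightedHomogeneous_X ℤ _ _)
    rw [DGraph.mdeg_cons]
    simpa [XG] using hedge.mul ih

theorem alternating_power_relation_general (n : ℕ)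
    (Γ : DGraph n) (hΓ : Γ.isPM) (i : ℕ) (h2 : i < n - 1) :
    ∑ σ : Equiv.Perm (Fin n),
      ((Equiv.Perm.sign σ : ℤˣ) : ℤ) • (XG (Γ.map (fun e => (σ e.1, σ e.2)))) ^ i = 0 := by
  have hdeg : Γ.mdeg = 1 := funext hΓ
  have hhom : IsWeightedHomogeneous (vertexWeight (Fin n)) (XG Γ ^ i) (i • 1) :=
    hdeg ▸ (isWeightedHomogeneous_XG Γ).pow i
  simp only [XG_map, ← map_pow]
  refine sum_sign_smul_rename_eq_zero _ fun d hd =>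
    d.exists_ne_of_forall_inl_add_inr_eq (i := i) (fun a => ?_) (by rw [Fintype.card_fin]; omega)
  rw [← weight_vertexWeight_apply, hhom (mem_support_iff.mp hd)]
  simp

/-- **Alternating power relations.** Let `n ≥ 4` be even, `Γ` a perfect matching on
`{1,…,n}`, and `i` odd with `1 < i < n−1`.  Then `Σ_{σ ∈ S_n} sgn(σ)·(X_{σΓ})^i = 0`. -/
theorem alternating_power_relation (n : ℕ) (hn : 4 ≤ n) (hne : Even n)
    (Γ : DGraph n) (hΓ : Γ.isPM) (i : ℕ) (hodd : Odd i) (h1 : 1 < i) (h2 : i < n - 1) :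
    ∑ σ : Equiv.Perm (Fin n),
      ((Equiv.Perm.sign σ : ℤˣ) : ℤ) • (XG (Γ.map (fun e => (σ e.1, σ e.2)))) ^ i = 0 :=
  alternating_power_relation_general n Γ hΓ i h2
end

section
/- (Existence of a stable (n−6)-matching.) Let m ≥ 3, let X be any type, and let p : {1,…,2m} → X be a function such that no value of p is attained m or more times. Then there exist m−3 pairwise disjoint two-element subsets {x_1,y_1},…,{x_{m−3},y_{m−3}} of {1,…,2m} with p(x_t) ≠ p(y_t) for every t, such that on the set T of the remaining 6 indices, no value of p is attained 3 or more times (i.e., for every c ∈ X, |{t ∈ T : p(t) = c}| ≤ 2). -/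
open Finset

private lemma aux_stable {V X : Type*} [DecidableEq V] [DecidableEq X] (p : V → X) :
    ∀ (k : ℕ) (s : Finset V), s.card = 2 * k + 6 →
      (∀ c, (s.filter (fun v => p v = c)).card ≤ k + 2) →
      ∃ L : List (V × V), L.length = k ∧
        (∀ q ∈ L, q.1 ∈ s ∧ q.2 ∈ s ∧ q.1 ≠ q.2 ∧ p q.1 ≠ p q.2) ∧
        L.Pairwise (fun q q' => q.1 ≠ q'.1 ∧ q.1 ≠ q'.2 ∧ q.2 ≠ q'.1 ∧ q.2 ≠ q'.2) ∧
        ∀ c, (s.filter (fun v => p v = c ∧ ∀ q ∈ L, v ≠ q.1 ∧ v ≠ q.2)).card ≤ 2 := by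
  intro k
  induction k with
  | zero =>
    intro s hcard hfib
    refine ⟨[], rfl, by simp, by simp, fun c => ?_⟩
    simpa using hfib c
  | succ k ih =>
    intro s hcard hfib
    have hsne : s.Nonempty := by
      rw [← Finset.card_pos, hcard]; omega
    obtain ⟨x, hxs, hxmax⟩ :=
      s.exists_max_image (fun v => (s.filter (fun w => p w = p v)).card) hsne
    have hsplit := Finset.card_filter_add_card_filter_not
      (s := s) (p := fun v => p v = p x)
    have hxfib : (s.filter (fun v => p v = p x)).card ≤ k + 3 := by
      have := hfib (p x); omega
    have hs1ne : (s.filter (fun v => ¬ p v = p x)).Nonempty := by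
      rw [← Finset.card_pos]; omega
    obtain ⟨y, hys1, hymax⟩ :=
      (s.filter (fun v => ¬ p v = p x)).exists_max_image
        (fun v => (s.filter (fun w => p w = p v)).card) hs1ne
    rw [Finset.mem_filter] at hys1
    obtain ⟨hys, hpxy'⟩ := hys1
    have hpxy : p x ≠ p y := fun h => hpxy' h.symm
    have hxy : x ≠ y := fun h => hpxy (by rw [h])
    set s' := s \ {x, y} with hs'def
    have hsub : ({x, y} : Finset V) ⊆ s := by
      intro v hv
      rcases Finset.mem_insert.mp hv with h | h
      · rwa [h]
      · rw [Finset.mem_singleton.mp h]; exact hys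
    have hcard' : s'.card = 2 * k + 6 := by
      rw [hs'def, Finset.card_sdiff_of_subset hsub, Finset.card_insert_of_notMem (by simpa),
        Finset.card_singleton, hcard]
      omega
    have hs'sub : s' ⊆ s := Finset.sdiff_subset
    have hmemx : ∀ v ∈ s', v ≠ x ∧ v ≠ y := by
      intro v hv
      rw [hs'def, Finset.mem_sdiff, Finset.mem_insert, Finset.mem_singleton] at hv
      exact ⟨fun h => hv.2 (Or.inl h), fun h => hv.2 (Or.inr h)⟩
    have hfib' : ∀ c, (s'.filter (fun v => p v = c)).card ≤ k + 2 := by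
      intro c
      by_cases hcx : c = p x
      · have hsub2 : s'.filter (fun v => p v = c) ⊆
            (s.filter (fun v => p v = c)).erase x := by
          intro v hv
          rw [Finset.mem_filter] at hv
          rw [Finset.mem_erase, Finset.mem_filter]
          exact ⟨(hmemx v hv.1).1, hs'sub hv.1, hv.2⟩
        have hxin : x ∈ s.filter (fun v => p v = c) := by
          rw [Finset.mem_filter]; exact ⟨hxs, hcx.symm⟩
        have := Finset.card_le_card hsub2
        rw [Finset.card_erase_of_mem hxin] at this
        have := hfib c
        omega
      · by_cases hcy : c = p y
        · have hsub2 : s'.filter (fun v => p v = c) ⊆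
              (s.filter (fun v => p v = c)).erase y := by
            intro v hv
            rw [Finset.mem_filter] at hv
            rw [Finset.mem_erase, Finset.mem_filter]
            exact ⟨(hmemx v hv.1).2, hs'sub hv.1, hv.2⟩
          have hyin : y ∈ s.filter (fun v => p v = c) := by
            rw [Finset.mem_filter]; exact ⟨hys, hcy.symm⟩
          have := Finset.card_le_card hsub2
          rw [Finset.card_erase_of_mem hyin] at this
          have := hfib c
          omega
        · by_contra hbig
          push_neg at hbig
          have hsfc : k + 3 ≤ (s.filter (fun v => p v = c)).card := by
            have : s'.filter (fun v => p v = c) ⊆ s.filter (fun v => p v = c) :=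
              Finset.filter_subset_filter _ hs'sub
            have := Finset.card_le_card this
            omega
          -- get a witness z with p z = c
          have hzne : (s.filter (fun v => p v = c)).Nonempty := by
            rw [← Finset.card_pos]; omega
          obtain ⟨z, hz⟩ := hzne
          rw [Finset.mem_filter] at hz
          -- fiber of p x is at least k+3
          have h1 : k + 3 ≤ (s.filter (fun v => p v = p x)).card := by
            have := hxmax z hz.1
            rw [hz.2] at this
            omega
          have hzs1 : z ∈ s.filter (fun v => ¬ p v = p x) := by
            rw [Finset.mem_filter]
            exact ⟨hz.1, by rw [hz.2]; exact hcx⟩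
          have h2 : k + 3 ≤ (s.filter (fun v => p v = p y)).card := by
            have := hymax z hzs1
            rw [hz.2] at this
            omega
          -- three disjoint fibers of size ≥ k+3 inside s of size 2k+8
          have hd1 : Disjoint (s.filter (fun v => p v = c))
              (s.filter (fun v => p v = p x)) := by
            rw [Finset.disjoint_left]
            intro a ha hb
            rw [Finset.mem_filter] at ha hb
            exact hcx (ha.2.symm.trans hb.2)
          have hd2 : Disjoint (s.filter (fun v => p v = c) ∪
              s.filter (fun v => p v = p x)) (s.filter (fun v => p v = p y)) := by
            rw [Finset.disjoint_left]
            intro a ha hb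
            rw [Finset.mem_union] at ha
            rw [Finset.mem_filter] at hb
            rcases ha with ha | ha <;> rw [Finset.mem_filter] at ha
            · exact hcy (ha.2.symm.trans hb.2)
            · exact hpxy (ha.2.symm.trans hb.2)
          have hsub3 : (s.filter (fun v => p v = c) ∪ s.filter (fun v => p v = p x))
              ∪ s.filter (fun v => p v = p y) ⊆ s := by
            intro a ha
            rw [Finset.mem_union, Finset.mem_union] at ha
            rcases ha with (ha | ha) | ha <;> exact (Finset.mem_filter.mp ha).1
          have := Finset.card_le_card hsub3
          rw [Finset.card_union_of_disjoint hd2, Finset.card_union_of_disjoint hd1] at this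
          omega
    obtain ⟨L', hlen', hmem', hpw', hrem'⟩ := ih s' hcard' hfib'
    refine ⟨(x, y) :: L', by simp [hlen'], ?_, ?_, ?_⟩
    · intro q hq
      rcases List.mem_cons.mp hq with h | h
      · rw [h]; exact ⟨hxs, hys, hxy, hpxy⟩
      · obtain ⟨h1, h2, h3, h4⟩ := hmem' q h
        exact ⟨hs'sub h1, hs'sub h2, h3, h4⟩
    · rw [List.pairwise_cons]
      refine ⟨fun q' hq' => ?_, hpw'⟩
      obtain ⟨h1, h2, _, _⟩ := hmem' q' hq'
      obtain ⟨hx1, hy1⟩ := hmemx q'.1 h1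
      obtain ⟨hx2, hy2⟩ := hmemx q'.2 h2
      exact ⟨fun h => hx1 h.symm, fun h => hx2 h.symm,
        fun h => hy1 h.symm, fun h => hy2 h.symm⟩
    · intro c
      have heq : s.filter (fun v => p v = c ∧ ∀ q ∈ (x, y) :: L', v ≠ q.1 ∧ v ≠ q.2)
          = s'.filter (fun v => p v = c ∧ ∀ q ∈ L', v ≠ q.1 ∧ v ≠ q.2) := by
        ext v
        simp only [Finset.mem_filter, hs'def, Finset.mem_sdiff, Finset.mem_insert,
          Finset.mem_singleton, List.mem_cons]
        constructor
        · rintro ⟨hvs, hpc, hall⟩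
          have hxy' := hall (x, y) (Or.inl rfl)
          refine ⟨⟨hvs, fun h => ?_⟩, hpc, fun q hq => hall q (Or.inr hq)⟩
          rcases h with h | h
          · exact hxy'.1 h
          · exact hxy'.2 h
        · rintro ⟨⟨hvs, hnot⟩, hpc, hall⟩
          refine ⟨hvs, hpc, fun q hq => ?_⟩
          rcases hq with h | h
          · rw [h]
            exact ⟨fun h' => hnot (Or.inl h'), fun h' => hnot (Or.inr h')⟩
          · exact hall q h
      rw [heq]
      exact hrem' c

/-- **Existence of a stable `(n−6)`-matching.** Let `m ≥ 3` and let
`p : {1,…,2m} → X` be such that no value is attained `m` or more times.  Then there are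
`m−3` pairwise disjoint two-element subsets `{x_t, y_t}` of `{1,…,2m}` with
`p x_t ≠ p y_t` for every `t`, such that among the remaining `6` indices no value of `p`
is attained `3` or more times. -/
theorem exists_stable_six_matching (m : ℕ) (hm : 3 ≤ m) (X : Type*) [DecidableEq X]
    (p : Fin (2 * m) → X)
    (hstable : ∀ c : X, (Finset.univ.filter (fun t => p t = c)).card < m) :
    ∃ P : Fin (m - 3) → Fin (2 * m) × Fin (2 * m),
      (∀ t, (P t).1 ≠ (P t).2 ∧ p (P t).1 ≠ p (P t).2) ∧
      (∀ t t', t ≠ t' →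
        Disjoint ({(P t).1, (P t).2} : Finset (Fin (2 * m)))
          {(P t').1, (P t').2}) ∧
      (∀ c : X,
        (Finset.univ.filter
          (fun v => p v = c ∧ ∀ t, v ≠ (P t).1 ∧ v ≠ (P t).2)).card ≤ 2) := by
  have hcard : (Finset.univ : Finset (Fin (2 * m))).card = 2 * (m - 3) + 6 := by
    simp only [Finset.card_univ, Fintype.card_fin]; omega
  have hfib : ∀ c, ((Finset.univ : Finset (Fin (2 * m))).filter
      (fun v => p v = c)).card ≤ (m - 3) + 2 := by
    intro c
    have := hstable c
    omega
  obtain ⟨L, hlen, hmem, hpw, hrem⟩ := aux_stable p (m - 3) Finset.univ hcard hfib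
  refine ⟨fun t => L.get (Fin.cast hlen.symm t), ?_, ?_, ?_⟩
  · intro t
    obtain ⟨_, _, h3, h4⟩ := hmem _ (L.get_mem _)
    exact ⟨h3, h4⟩
  · intro t t' htt'
    have hR := List.pairwise_iff_get.mp hpw
    have key : ∀ (i j : Fin L.length), i ≠ j →
        (L.get i).1 ≠ (L.get j).1 ∧ (L.get i).1 ≠ (L.get j).2 ∧
        (L.get i).2 ≠ (L.get j).1 ∧ (L.get i).2 ≠ (L.get j).2 := by
      intro i j hij
      rcases lt_or_gt_of_ne hij with h | h
      · exact hR i j h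
      · obtain ⟨h1, h2, h3, h4⟩ := hR j i h
        exact ⟨fun h' => h1 h'.symm, fun h' => h3 h'.symm,
          fun h' => h2 h'.symm, fun h' => h4 h'.symm⟩
    have hij : (Fin.cast hlen.symm t) ≠ (Fin.cast hlen.symm t') := by
      intro h
      exact htt' (by simpa [Fin.ext_iff] using h)
    obtain ⟨h1, h2, h3, h4⟩ := key _ _ hij
    rw [Finset.disjoint_left]
    intro a ha hb
    rw [Finset.mem_insert, Finset.mem_singleton] at ha hb
    rcases ha with ha | ha <;> rcases hb with hb | hb <;> subst ha
    · exact h1 hb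
    · exact h2 hb
    · exact h3 hb
    · exact h4 hb
  · intro c
    refine le_trans (Finset.card_le_card ?_) (hrem c)
    intro v hv
    simp only [Finset.mem_filter] at hv ⊢
    obtain ⟨_, hpc, hall⟩ := hv
    refine ⟨Finset.mem_univ v, hpc, fun q hq => ?_⟩
    obtain ⟨i, hi⟩ := List.mem_iff_get.mp hq
    have h2 := hall (Fin.cast hlen i)
    beta_reduce at h2
    have h3 : L.get (Fin.cast hlen.symm (Fin.cast hlen i)) = q := by
      rw [← hi]
      exact congrArg L.get (Fin.ext rfl)
    rw [h3] at h2
    exact h2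
end
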